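/- arXiv:2003.02344 — 6 statements merged into one kernel-verified Lean document; each statement's English description precedes it below -/
import Mathlib

section
/- Let μ = Σ_{n=1}^N w_n δ_{x_n} be a probability measure on ℝ with N distinct atoms x_1,…,x_N and positive weights w_1,…,w_N summing to 1, let P_0,…,P_{N−1} be monic real polynomials with deg P_k = k that are pairwise orthogonal in L²(μ), set P_N(x) = ∏_{n=1}^N (x − x_n), and suppose a_1,…,a_N ∈ ℝ and b_1,…,b_{N−1} > 0 satisfy the three-term recurrence x P_n(x) = b_n P_{n−1}(x) + a_{n+1} P_n(x) + P_{n+1}(x) for 0 ≤ n ≤ N−1 (with P_{−1} = 0). Then the set of eigenvalues of the Jacobi matrix J_{a,b} equals the set of atoms {x_1,…,x_N} of μ. -/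
/-!
At an atom `x n` the polynomial `P N` vanishes, so evaluating the three-term recurrence at `x n`
gives a solution `k ↦ P k (x n)` of it that stops at `k = N`. Dividing by `√(b 1 ⋯ b k)` (the
`L²(μ)`-norm of `P k`) makes the recurrence symmetric, and it becomes the eigenvalue equation
`J u = x n • u` row by row; `u 0 = 1` so `u ≠ 0`. These `N` eigenvalues of the `N × N` matrix are
distinct, and eigenvectors for distinct eigenvalues are linearly independent, so there is no
room for another eigenvalue.
-/

open MeasureTheory ProbabilityTheory Matrix Finset Real
open scoped ENNReal NNReal

noncomputable section

/-- The symmetric tridiagonal (Jacobi) matrix with diagonal `a` and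
off-diagonal entries `√(b n)`. -/
def jacobiMatrix {N : ℕ} (a : Fin N → ℝ) (b : Fin (N - 1) → ℝ) :
    Matrix (Fin N) (Fin N) ℝ :=
  Matrix.of fun i j =>
    if i = j then a i
    else if h : (i : ℕ) + 1 = (j : ℕ) then
      Real.sqrt (b ⟨i, by have := j.isLt; omega⟩)
    else if h' : (j : ℕ) + 1 = (i : ℕ) then
      Real.sqrt (b ⟨j, by have := i.isLt; omega⟩)
    else 0

lemma jacobiMatrix_isHermitian {N : ℕ} (a : Fin N → ℝ) (b : Fin (N - 1) → ℝ) :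
    (jacobiMatrix a b).IsHermitian := by
  unfold Matrix.IsHermitian
  ext i j
  simp only [jacobiMatrix, Matrix.conjTranspose_apply, Matrix.of_apply, star_trivial]
  by_cases hij : i = j
  · subst hij; simp
  · have hji : j ≠ i := fun h => hij h.symm
    rw [if_neg hji, if_neg hij]
    by_cases h1 : (j : ℕ) + 1 = (i : ℕ)
    · have h2 : ¬((i : ℕ) + 1 = (j : ℕ)) := by omega
      rw [dif_pos h1, dif_neg h2, dif_pos h1]
    · by_cases h2 : (i : ℕ) + 1 = (j : ℕ)
      · rw [dif_neg h1, dif_pos h2, dif_pos h2]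
      · rw [dif_neg h1, dif_neg h2, dif_neg h2, dif_neg h1]

/-- Reordering of a finite tuple in decreasing order. -/
def sortDesc {N : ℕ} (v : Fin N → ℝ) : Fin N → ℝ :=
  fun i => v (Tuple.sort v (Fin.rev i))

/-- The eigenvalues of the Jacobi matrix `J_{a,b}`, in decreasing order. -/
def jacobiEigs {N : ℕ} (a : Fin N → ℝ) (b : Fin (N - 1) → ℝ) : Fin N → ℝ :=
  sortDesc (jacobiMatrix_isHermitian a b).eigenvalues

/-- The squared first coordinates of unit eigenvectors of the Jacobi matrix `J_{a,b}`,
indexed compatibly with `jacobiEigs` (decreasing eigenvalue order):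
`jacobiWeights hN a b i` is the squared first coordinate of a unit eigenvector
associated with the eigenvalue `jacobiEigs a b i`. -/
def jacobiWeights {N : ℕ} (hN : 0 < N) (a : Fin N → ℝ) (b : Fin (N - 1) → ℝ) :
    Fin N → ℝ :=
  fun i =>
    ((jacobiMatrix_isHermitian a b).eigenvectorBasis
        (Tuple.sort (jacobiMatrix_isHermitian a b).eigenvalues (Fin.rev i)) ⟨0, hN⟩) ^ 2

/-- The spectral map: Jacobi data `(a, b)` is sent to the decreasingly ordered
eigenvalues together with the first `N - 1` spectral weights. -/
def spectralMap {N : ℕ} (hN : 0 < N) (a : Fin N → ℝ) (b : Fin (N - 1) → ℝ) :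
    (Fin N → ℝ) × (Fin (N - 1) → ℝ) :=
  ⟨jacobiEigs a b, fun i => jacobiWeights hN a b ⟨i, by have := i.isLt; omega⟩⟩

/-- The Vandermonde product `∏_{i<j} (x j - x i)`. -/
def vdm {N : ℕ} (x : Fin N → ℝ) : ℝ :=
  ∏ i : Fin N, ∏ j ∈ Finset.Ioi i, (x j - x i)

/-- The open chamber of decreasing vectors `x 0 > x 1 > … `. -/
def chamber (N : ℕ) : Set (Fin N → ℝ) := {x | ∀ i j : Fin N, i < j → x j < x i}

/-- The open simplex of positive weights with sum `< 1`. -/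
def openSimplex (N : ℕ) : Set (Fin (N - 1) → ℝ) :=
  {w | (∀ i, 0 < w i) ∧ ∑ i, w i < 1}

/-- Extension of `N - 1` weights by the last weight `1 - ∑ w`. -/
def wExt {N : ℕ} (w : Fin (N - 1) → ℝ) : Fin N → ℝ :=
  fun n => if h : (n : ℕ) < N - 1 then w ⟨n, h⟩ else 1 - ∑ i, w i

/-- The first `N` coordinates of a vector of length `2N - 1`. -/
def xPart {N : ℕ} (p : Fin (2 * N - 1) → ℝ) : Fin N → ℝ :=
  fun i => p ⟨i, by have := i.isLt; omega⟩

/-- The last `N - 1` coordinates of a vector of length `2N - 1`. -/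
def wPart {N : ℕ} (p : Fin (2 * N - 1) → ℝ) : Fin (N - 1) → ℝ :=
  fun i => p ⟨N + i, by have := i.isLt; omega⟩

/-- The diagonal coefficients `a` built from the parameters `ξ`:
`a 1 = ξ 1`, `a n = ξ (2n-2) + ξ (2n-1)` (in one-based notation). -/
def xiToA {N : ℕ} (ξ : Fin (2 * N - 1) → ℝ) : Fin N → ℝ :=
  fun n =>
    if h : (n : ℕ) = 0 then ξ ⟨0, by have := n.isLt; omega⟩
    else ξ ⟨2 * (n : ℕ) - 1, by have := n.isLt; omega⟩ +
      ξ ⟨2 * (n : ℕ), by have := n.isLt; omega⟩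

/-- The off-diagonal coefficients `b` built from the parameters `ξ`:
`b n = ξ (2n-1) * ξ (2n)` (in one-based notation). -/
def xiToB {N : ℕ} (ξ : Fin (2 * N - 1) → ℝ) : Fin (N - 1) → ℝ :=
  fun n => ξ ⟨2 * (n : ℕ), by have := n.isLt; omega⟩ *
    ξ ⟨2 * (n : ℕ) + 1, by have := n.isLt; omega⟩

/-- The chain-sequence parameters `ξ` built from canonical moments `c`:
`ξ 1 = c 1` and `ξ n = (1 - c (n-1)) * c n` (in one-based notation). -/
def cToXi {N : ℕ} (c : Fin (2 * N - 1) → ℝ) : Fin (2 * N - 1) → ℝ :=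
  fun k =>
    if (k : ℕ) = 0 then c k
    else (1 - c ⟨(k : ℕ) - 1, by have := k.isLt; omega⟩) * c k

/-- The lower bidiagonal matrix `Ξ` with diagonal `√ξ 1, √ξ 3, …` and
subdiagonal `√ξ 2, √ξ 4, …` (in one-based notation). -/
def bidiag {N : ℕ} (ξ : Fin (2 * N - 1) → ℝ) : Matrix (Fin N) (Fin N) ℝ :=
  Matrix.of fun i j =>
    if i = j then Real.sqrt (ξ ⟨2 * (i : ℕ), by have := i.isLt; omega⟩)
    else if h : (j : ℕ) + 1 = (i : ℕ) then
      Real.sqrt (ξ ⟨2 * (j : ℕ) + 1, by have := i.isLt; omega⟩)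
    else 0

lemma mul_transpose_isHermitian {N : ℕ} (A : Matrix (Fin N) (Fin N) ℝ) :
    (A * Aᵀ).IsHermitian := by
  unfold Matrix.IsHermitian
  ext i j
  simp [Matrix.mul_apply, Matrix.conjTranspose_apply, Matrix.transpose_apply, mul_comm]

theorem Matrix.spectrum_eq_range_of_injective_eigenvalues {K ι : Type*} [Field K] [Fintype ι]
    [DecidableEq ι] (A : Matrix ι ι K) (μ : ι → K) (hμ : Function.Injective μ) (v : ι → ι → K)
    (hv : ∀ i, v i ≠ 0) (hAv : ∀ i, A *ᵥ v i = μ i • v i) :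
    spectrum K A = Set.range μ := by
  have heig : ∀ i, Module.End.HasEigenvector A.toLin' (μ i) (v i) := fun i =>
    ⟨Module.End.mem_eigenspace_iff.mpr (by rw [Matrix.toLin'_apply, hAv i]), hv i⟩
  rw [← Matrix.spectrum_toLin']
  refine Set.Subset.antisymm (fun t ht => ?_) (Set.range_subset_iff.mpr fun i =>
    (Module.End.hasEigenvalue_of_hasEigenvector (heig i)).mem_spectrum)
  by_contra hnot
  obtain ⟨u, hu⟩ := (Module.End.hasEigenvalue_iff_mem_spectrum.mpr ht).exists_hasEigenvector
  have hinj : Function.Injective fun o : Option ι => o.elim t μ := by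
    rintro (_ | i) (_ | j) h
    exacts [rfl, (hnot ⟨j, h.symm⟩).elim, (hnot ⟨i, h⟩).elim, congrArg some (hμ h)]
  have hli := Module.End.eigenvectors_linearIndependent' _ _ hinj (fun o => o.elim u v)
    (fun o => by cases o; exacts [hu, heig _])
  simpa using hli.fintype_card_le_finrank

theorem jacobiMatrix_succ_apply {N : ℕ} (a b : ℕ → ℝ) (i j : Fin N) :
    jacobiMatrix (fun i : Fin N => a (i + 1)) (fun i : Fin (N - 1) => b (i + 1)) i j =
      (if (j : ℕ) = i then a (i + 1) else 0) + (if (j : ℕ) = i + 1 then √(b (i + 1)) else 0) +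
        (if (j : ℕ) + 1 = i then √(b (j + 1)) else 0) := by
  simp only [jacobiMatrix, of_apply, Fin.ext_iff]
  split_ifs <;> first | omega | simp

theorem jacobiMatrix_succ_mulVec_apply {N : ℕ} (a b u : ℕ → ℝ) (hu : u N = 0) (i : Fin N) :
    (jacobiMatrix (fun i : Fin N => a (i + 1)) (fun i : Fin (N - 1) => b (i + 1)) *ᵥ
        fun j => u j) i =
      (if (i : ℕ) = 0 then 0 else √(b i) * u (i - 1)) + a (i + 1) * u i +
        √(b (i + 1)) * u (i + 1) := by
  obtain ⟨i, hi⟩ := i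
  simp only [mulVec, dotProduct, jacobiMatrix_succ_apply, add_mul, ite_mul, zero_mul,
    Finset.sum_add_distrib]
  rw [Fin.sum_univ_eq_sum_range (fun j => if j = i then a (i + 1) * u j else 0),
    Fin.sum_univ_eq_sum_range (fun j => if j = i + 1 then √(b (i + 1)) * u j else 0),
    Fin.sum_univ_eq_sum_range (fun j => if j + 1 = i then √(b (j + 1)) * u j else 0)]
  rw [Finset.sum_ite_eq', Finset.sum_ite_eq', if_pos (Finset.mem_range.2 hi)]
  have h_upper : (if i + 1 ∈ range N then √(b (i + 1)) * u (i + 1) else 0) =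
      √(b (i + 1)) * u (i + 1) := by
    split_ifs with h
    · rfl
    · rw [show i + 1 = N by rw [Finset.mem_range] at h; omega, hu, mul_zero]
  have h_lower : ∑ j ∈ range N, (if j + 1 = i then √(b (j + 1)) * u j else 0) =
      if i = 0 then 0 else √(b i) * u (i - 1) := by
    rcases i with _ | m
    · simp
    · simp only [Nat.add_right_cancel_iff, Finset.sum_ite_eq', Finset.mem_range]
      simp [show m < N by omega]
  rw [h_upper, h_lower]
  ring

def sqrtProd (b : ℕ → ℝ) (k : ℕ) : ℝ := ∏ j ∈ range k, √(b (j + 1))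

theorem sqrtProd_zero (b : ℕ → ℝ) : sqrtProd b 0 = 1 := prod_range_zero _

theorem sqrtProd_succ (b : ℕ → ℝ) (k : ℕ) : sqrtProd b (k + 1) = sqrtProd b k * √(b (k + 1)) :=
  prod_range_succ _ _

theorem jacobiMatrix_mulVec_div_sqrtProd_eq_smul {N : ℕ} (a b p : ℕ → ℝ) (t : ℝ)
    (hb : ∀ n, 1 ≤ n → n ≤ N - 1 → 0 < b n) (hpN : p N = 0)
    (hp0 : t * p 0 = a 1 * p 0 + p 1)
    (hp : ∀ n, 1 ≤ n → n ≤ N - 1 → t * p n = b n * p (n - 1) + a (n + 1) * p n + p (n + 1)) :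
    jacobiMatrix (fun i : Fin N => a (i + 1)) (fun i : Fin (N - 1) => b (i + 1)) *ᵥ
        (fun j : Fin N => p j / sqrtProd b j) = t • fun j : Fin N => p j / sqrtProd b j := by
  set u : ℕ → ℝ := fun k => p k / sqrtProd b k
  have h_lower : ∀ n, n + 1 ≤ N - 1 →
      √(b (n + 1)) * u n = b (n + 1) * p n / sqrtProd b (n + 1) := by
    intro n hn
    have hβ := hb (n + 1) (Nat.le_add_left 1 n) hn
    have hsqrt := (Real.sqrt_pos.2 hβ).ne'
    simp only [u, sqrtProd_succ]
    field_simp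
    rw [Real.sq_sqrt hβ.le]
    ring
  have h_upper : ∀ n, n < N → √(b (n + 1)) * u (n + 1) = p (n + 1) / sqrtProd b n := by
    intro n hn
    simp only [u, sqrtProd_succ]
    rcases (show n + 1 ≤ N - 1 ∨ n + 1 = N by omega) with hn | hn
    · have hsqrt := (Real.sqrt_pos.2 (hb (n + 1) (Nat.le_add_left 1 n) hn)).ne'
      field_simp
    · simp [hn, hpN]
  funext ⟨n, hn⟩
  rw [jacobiMatrix_succ_mulVec_apply a b u (by simp [u, hpN]), Pi.smul_apply, smul_eq_mul,
    h_upper n hn]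
  rcases n with _ | n
  · simp [u, sqrtProd_zero, hp0]
  · rw [if_neg n.succ_ne_zero, Nat.add_sub_cancel, h_lower n (by omega)]
    simp only [u]
    rw [mul_div_assoc' t, hp (n + 1) (by omega) (by omega), Nat.add_sub_cancel]
    ring

theorem atoms_are_eigenvalues_general
    (N : ℕ) (hN : 0 < N) (x : Fin N → ℝ)
    (hx : Function.Injective x)
    (P : ℕ → Polynomial ℝ) (a b : ℕ → ℝ)
    (hmonic : ∀ k, k ≤ N - 1 → (P k).Monic)
    (hdeg : ∀ k, k ≤ N - 1 → (P k).natDegree = k)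
    (hPN : P N = ∏ n, (Polynomial.X - Polynomial.C (x n)))
    (hb : ∀ n, 1 ≤ n → n ≤ N - 1 → 0 < b n)
    (hrec0 : Polynomial.X * P 0 = Polynomial.C (a 1) * P 0 + P 1)
    (hrec : ∀ n, 1 ≤ n → n ≤ N - 1 →
      Polynomial.X * P n =
        Polynomial.C (b n) * P (n - 1) + Polynomial.C (a (n + 1)) * P n + P (n + 1)) :
    spectrum ℝ
        (jacobiMatrix (fun i : Fin N => a ((i : ℕ) + 1))
          (fun i : Fin (N - 1) => b ((i : ℕ) + 1)))
      = Set.range x := by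
  have hP0 : P 0 = 1 :=
    Polynomial.eq_one_of_monic_natDegree_zero (hmonic 0 (Nat.zero_le _)) (hdeg 0 (Nat.zero_le _))
  refine Matrix.spectrum_eq_range_of_injective_eigenvalues _ x hx
    (fun n k => (P k).eval (x n) / sqrtProd b k) (fun n hzero => ?_) (fun n => ?_)
  · simpa [hP0, sqrtProd_zero] using congrFun hzero ⟨0, hN⟩
  · refine jacobiMatrix_mulVec_div_sqrtProd_eq_smul a b (fun k => (P k).eval (x n)) (x n) hb
      ?_ ?_ ?_
    · rw [hPN, Polynomial.eval_prod]
      exact prod_eq_zero (mem_univ n) (by simp)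
    · simpa [hP0] using congrArg (Polynomial.eval (x n)) hrec0
    · intro k hk1 hkN
      simpa using congrArg (Polynomial.eval (x n)) (hrec k hk1 hkN)

/-- the atoms of μ are the eigenvalues of the Jacobi matrix. -/
theorem atoms_are_eigenvalues
    (N : ℕ) (hN : 0 < N) (x w : Fin N → ℝ)
    (hx : Function.Injective x) (hw : ∀ n, 0 < w n) (hw1 : ∑ n, w n = 1)
    (P : ℕ → Polynomial ℝ) (a b : ℕ → ℝ)
    (hmonic : ∀ k, k ≤ N - 1 → (P k).Monic)
    (hdeg : ∀ k, k ≤ N - 1 → (P k).natDegree = k)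
    (horth : ∀ j k, j ≤ N - 1 → k ≤ N - 1 → j ≠ k →
      ∑ n, w n * ((P j).eval (x n) * (P k).eval (x n)) = 0)
    (hPN : P N = ∏ n, (Polynomial.X - Polynomial.C (x n)))
    (hb : ∀ n, 1 ≤ n → n ≤ N - 1 → 0 < b n)
    (hrec0 : Polynomial.X * P 0 = Polynomial.C (a 1) * P 0 + P 1)
    (hrec : ∀ n, 1 ≤ n → n ≤ N - 1 →
      Polynomial.X * P n =
        Polynomial.C (b n) * P (n - 1) + Polynomial.C (a (n + 1)) * P n + P (n + 1)) :
    spectrum ℝ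
        (jacobiMatrix (fun i : Fin N => a ((i : ℕ) + 1))
          (fun i : Fin (N - 1) => b ((i : ℕ) + 1)))
      = Set.range x :=
  atoms_are_eigenvalues_general N hN x hx P a b hmonic hdeg hPN hb hrec0 hrec
end
end

section
/- Let μ = Σ_{n=1}^N w_n δ_{x_n} be a probability measure on ℝ with N distinct atoms x_1,…,x_N and positive weights w_1,…,w_N summing to 1, let P_0,…,P_{N−1} be monic real polynomials with deg P_k = k that are pairwise orthogonal in L²(μ), set P_N(x) = ∏_{n=1}^N (x − x_n), and suppose a_1,…,a_N ∈ ℝ and b_1,…,b_{N−1} > 0 satisfy the three-term recurrence x P_n(x) = b_n P_{n−1}(x) + a_{n+1} P_n(x) + P_{n+1}(x) for 0 ≤ n ≤ N−1 (with P_{−1} = 0). Then |Δ(x_1,…,x_N)|² ∏_{n=1}^N w_n = ∏_{n=1}^{N−1} b_n^{N−n}, where Δ(x_1,…,x_N) = ∏_{i<j}(x_j − x_i). -/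
open MeasureTheory ProbabilityTheory Matrix Finset Real
open scoped ENNReal NNReal

noncomputable section

lemma aux_prod_Icc_pow (b : ℕ → ℝ) (N : ℕ) :
    ∏ n ∈ Finset.range N, ∏ i ∈ Finset.Icc 1 n, b i
      = ∏ i ∈ Finset.Icc 1 N, b i ^ (N - i) := by
  induction N with
  | zero => simp
  | succ N ih =>
    rw [Finset.prod_range_succ, ih,
      Finset.prod_Icc_succ_top (by omega : 1 ≤ N + 1)]
    simp only [Nat.sub_self, pow_zero, mul_one]
    rw [← Finset.prod_mul_distrib]
    refine Finset.prod_congr rfl fun i hi => ?_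
    have hi' : i ≤ N := (Finset.mem_Icc.mp hi).2
    rw [← pow_succ]
    congr 1
    omega

/-- squared Vandermonde times weights as a product of the `b` coefficients. -/
theorem vandermonde_weights_prod_b
    (N : ℕ) (hN : 0 < N) (x w : Fin N → ℝ)
    (hx : Function.Injective x) (hw : ∀ n, 0 < w n) (hw1 : ∑ n, w n = 1)
    (P : ℕ → Polynomial ℝ) (a b : ℕ → ℝ)
    (hmonic : ∀ k, k ≤ N - 1 → (P k).Monic)
    (hdeg : ∀ k, k ≤ N - 1 → (P k).natDegree = k)
    (horth : ∀ j k, j ≤ N - 1 → k ≤ N - 1 → j ≠ k →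
      ∑ n, w n * ((P j).eval (x n) * (P k).eval (x n)) = 0)
    (hPN : P N = ∏ n, (Polynomial.X - Polynomial.C (x n)))
    (hb : ∀ n, 1 ≤ n → n ≤ N - 1 → 0 < b n)
    (hrec0 : Polynomial.X * P 0 = Polynomial.C (a 1) * P 0 + P 1)
    (hrec : ∀ n, 1 ≤ n → n ≤ N - 1 →
      Polynomial.X * P n =
        Polynomial.C (b n) * P (n - 1) + Polynomial.C (a (n + 1)) * P n + P (n + 1)) :
    |vdm x| ^ 2 * ∏ n, w n = ∏ i ∈ Finset.Icc 1 (N - 1), b i ^ (N - i) := by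
  classical
  obtain ⟨M, rfl⟩ : ∃ M, N = M + 1 := ⟨N - 1, by omega⟩
  simp only [Nat.add_sub_cancel] at hmonic hdeg horth hb hrec ⊢
  set hnorm : ℕ → ℝ := fun k => ∑ n, w n * ((P k).eval (x n)) ^ 2 with hnormdef
  have hP0 : P 0 = 1 :=
    ((hmonic 0 (Nat.zero_le _)).natDegree_eq_zero).mp (hdeg 0 (Nat.zero_le _))
  have h0 : hnorm 0 = 1 := by simp [hnormdef, hP0, hw1]
  have hPNeval : ∀ m, (P (M + 1)).eval (x m) = 0 := by
    intro m
    rw [hPN, Polynomial.eval_prod]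
    exact Finset.prod_eq_zero (Finset.mem_univ m) (by simp)
  -- main recurrence for the norms
  have hstep : ∀ n, 1 ≤ n → n ≤ M → hnorm n = b n * hnorm (n - 1) := by
    intro n h1 h2
    have hpt : ∀ m : Fin (M + 1), x m * (P n).eval (x m)
        = b n * (P (n - 1)).eval (x m) + a (n + 1) * (P n).eval (x m)
          + (P (n + 1)).eval (x m) := by
      intro m
      have := congrArg (Polynomial.eval (x m)) (hrec n h1 h2)
      simpa using this
    have horth1 : ∑ m, w m * ((P n).eval (x m) * (P (n - 1)).eval (x m)) = 0 :=
      horth n (n - 1) h2 (by omega) (by omega)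
    have horth2 : ∑ m, w m * ((P (n + 1)).eval (x m) * (P (n - 1)).eval (x m)) = 0 := by
      rcases Nat.lt_or_ge n M with hlt | hge
      · exact horth (n + 1) (n - 1) (by omega) (by omega) (by omega)
      · refine Finset.sum_eq_zero fun m _ => ?_
        have hz : (P (n + 1)).eval (x m) = 0 := by
          have hnm : n + 1 = M + 1 := by omega
          rw [hnm]; exact hPNeval m
        rw [hz]; ring
    have hS1 : ∑ m, w m * (x m * (P n).eval (x m) * (P (n - 1)).eval (x m))
        = b n * hnorm (n - 1) := by
      have hterm : ∀ m : Fin (M + 1),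
          w m * (x m * (P n).eval (x m) * (P (n - 1)).eval (x m))
            = b n * (w m * ((P (n - 1)).eval (x m)) ^ 2)
              + a (n + 1) * (w m * ((P n).eval (x m) * (P (n - 1)).eval (x m)))
              + w m * ((P (n + 1)).eval (x m) * (P (n - 1)).eval (x m)) := by
        intro m
        rw [hpt m]; ring
      rw [Finset.sum_congr rfl fun m _ => hterm m]
      rw [Finset.sum_add_distrib, Finset.sum_add_distrib, ← Finset.mul_sum,
        ← Finset.mul_sum, horth1, horth2, hnormdef]
      ring
    have hS2 : ∑ m, w m * (x m * (P n).eval (x m) * (P (n - 1)).eval (x m))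
        = hnorm n := by
      rcases Nat.lt_or_ge n 2 with hn1 | hn2
      · -- n = 1
        have hn : n = 1 := by omega
        subst hn
        have hpt0 : ∀ m : Fin (M + 1), x m * (P 0).eval (x m)
            = a 1 * (P 0).eval (x m) + (P 1).eval (x m) := by
          intro m
          have := congrArg (Polynomial.eval (x m)) hrec0
          simpa using this
        have hterm : ∀ m : Fin (M + 1),
            w m * (x m * (P 1).eval (x m) * (P 0).eval (x m))
              = a 1 * (w m * ((P 1).eval (x m) * (P 0).eval (x m)))
                + w m * ((P 1).eval (x m)) ^ 2 := by
          intro m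
          have : w m * (x m * (P 1).eval (x m) * (P 0).eval (x m))
              = w m * ((P 1).eval (x m) * (x m * (P 0).eval (x m))) := by ring
          rw [this, hpt0 m]; ring
        rw [Finset.sum_congr rfl fun m _ => hterm m, Finset.sum_add_distrib,
          ← Finset.mul_sum, horth 1 0 h2 (by omega) (by omega), hnormdef]
        ring
      · -- n ≥ 2
        have hpt1 : ∀ m : Fin (M + 1), x m * (P (n - 1)).eval (x m)
            = b (n - 1) * (P (n - 1 - 1)).eval (x m)
              + a n * (P (n - 1)).eval (x m) + (P n).eval (x m) := by
          intro m
          have := congrArg (Polynomial.eval (x m)) (hrec (n - 1) (by omega) (by omega))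
          have hn' : n - 1 + 1 = n := by omega
          rw [hn'] at this
          simpa using this
        have hterm : ∀ m : Fin (M + 1),
            w m * (x m * (P n).eval (x m) * (P (n - 1)).eval (x m))
              = b (n - 1) * (w m * ((P n).eval (x m) * (P (n - 1 - 1)).eval (x m)))
                + a n * (w m * ((P n).eval (x m) * (P (n - 1)).eval (x m)))
                + w m * ((P n).eval (x m)) ^ 2 := by
          intro m
          have : w m * (x m * (P n).eval (x m) * (P (n - 1)).eval (x m))
              = w m * ((P n).eval (x m) * (x m * (P (n - 1)).eval (x m))) := by ring
          rw [this, hpt1 m]; ring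
        rw [Finset.sum_congr rfl fun m _ => hterm m, Finset.sum_add_distrib,
          Finset.sum_add_distrib, ← Finset.mul_sum, ← Finset.mul_sum,
          horth n (n - 1 - 1) h2 (by omega) (by omega), horth1, hnormdef]
        ring
    rw [← hS2, hS1]
  -- closed form for the norms
  have hval : ∀ n, n ≤ M → hnorm n = ∏ i ∈ Finset.Icc 1 n, b i := by
    intro n
    induction n with
    | zero => intro _; simpa using h0
    | succ n ih =>
      intro hn
      have := hstep (n + 1) (by omega) hn
      rw [Nat.add_sub_cancel] at this
      rw [this, ih (by omega), Finset.prod_Icc_succ_top (by omega : 1 ≤ n + 1), mul_comm]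
  have hprodh : ∏ k : Fin (M + 1), hnorm (k : ℕ)
      = ∏ i ∈ Finset.Icc 1 M, b i ^ (M + 1 - i) := by
    rw [Fin.prod_univ_eq_prod_range (fun k => hnorm k) (M + 1)]
    rw [Finset.prod_congr rfl fun n hn =>
      hval n (by have := Finset.mem_range.mp hn; omega)]
    rw [aux_prod_Icc_pow, Finset.prod_Icc_succ_top (by omega : 1 ≤ M + 1)]
    simp
  -- matrix part
  set Vm : Matrix (Fin (M + 1)) (Fin (M + 1)) ℝ :=
    Matrix.of fun n k => (P (k : ℕ)).eval (x n) with hVm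
  set Mm : Matrix (Fin (M + 1)) (Fin (M + 1)) ℝ :=
    Matrix.of fun n k => Real.sqrt (w n) * Vm n k with hMm
  have hdetV : Vm.det = (Matrix.vandermonde x).det :=
    (Matrix.det_eval_matrixOfPolynomials_eq_det_vandermonde x (fun k => P (k : ℕ))
      (fun k => hdeg (k : ℕ) (by have := k.isLt; omega))
      (fun k => hmonic (k : ℕ) (by have := k.isLt; omega))).symm
  have hdetM : Mm.det = (∏ n, Real.sqrt (w n)) * Vm.det :=
    Matrix.det_mul_column (fun n => Real.sqrt (w n)) Vm
  have hMM : Mmᵀ * Mm = Matrix.diagonal (fun k : Fin (M + 1) => hnorm (k : ℕ)) := by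
    ext j k
    simp only [Matrix.mul_apply, Matrix.transpose_apply, hMm, hVm, Matrix.of_apply]
    have key : ∀ n : Fin (M + 1),
        Real.sqrt (w n) * (P (j : ℕ)).eval (x n) * (Real.sqrt (w n) * (P (k : ℕ)).eval (x n))
          = w n * ((P (j : ℕ)).eval (x n) * (P (k : ℕ)).eval (x n)) := by
      intro n
      rw [mul_mul_mul_comm, Real.mul_self_sqrt (hw n).le]
    rw [Finset.sum_congr rfl fun n _ => key n]
    by_cases hjk : j = k
    · subst hjk
      rw [Matrix.diagonal_apply_eq, hnormdef]
      exact Finset.sum_congr rfl fun n _ => by ring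
    · rw [Matrix.diagonal_apply_ne _ hjk]
      exact horth (j : ℕ) (k : ℕ) (by have := j.isLt; omega) (by have := k.isLt; omega)
        (fun h => hjk (Fin.val_injective h))
  have hdet2 : ∏ k : Fin (M + 1), hnorm (k : ℕ) = Mm.det ^ 2 := by
    have hd := congrArg Matrix.det hMM
    rw [Matrix.det_mul, Matrix.det_transpose, Matrix.det_diagonal] at hd
    rw [← hd, sq]
  have hsq : (∏ n, Real.sqrt (w n)) ^ 2 = ∏ n, w n := by
    rw [← Finset.prod_pow]
    exact Finset.prod_congr rfl fun n _ => Real.sq_sqrt (hw n).le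
  calc |vdm x| ^ 2 * ∏ n, w n
      = (Matrix.vandermonde x).det ^ 2 * (∏ n, Real.sqrt (w n)) ^ 2 := by
        rw [sq_abs, hsq]
        congr 1
        rw [vdm, Matrix.det_vandermonde]
    _ = Mm.det ^ 2 := by rw [hdetM, hdetV]; ring
    _ = ∏ i ∈ Finset.Icc 1 M, b i ^ (M + 1 - i) := by rw [← hdet2, hprodh]
end
end

section
/- Fix an integer N ≥ 2 and define the map G : ℝ^N × (0,∞)^{N−1} → ℝ^{2N−1} by G(a_1,…,a_N, b_1,…,b_{N−1}) = ((J_{a,b})^1_{1,1}, (J_{a,b})^2_{1,1}, …, (J_{a,b})^{2N−1}_{1,1}), i.e. the k-th component of G is the (1,1) entry of the k-th power of the Jacobi matrix J_{a,b} (this entry equals the k-th moment m_k of the spectral measure of J_{a,b} at the first coordinate vector). Then G is continuously differentiable on ℝ^N × (0,∞)^{N−1} and at every point the absolute value of the determinant of its derivative (as a linear map ℝ^{2N−1} → ℝ^{2N−1}) equals ∏_{n=1}^{N−1} b_n^{2(N−n)−1}. -/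
open MeasureTheory ProbabilityTheory Matrix Finset Real
open scoped ENNReal NNReal

noncomputable section

/-- The map sending (rolled-up) Jacobi data `(a, b)` to the moments
`((J_{a,b})^k)_{1,1}`, `k = 1, …, 2N - 1`, of its spectral measure. -/
def jacobiMomentMap (N : ℕ) (hN : 0 < N) (p : Fin (2 * N - 1) → ℝ) :
    Fin (2 * N - 1) → ℝ :=
  fun k => (jacobiMatrix (xPart p) (wPart p) ^ ((k : ℕ) + 1)) ⟨0, hN⟩ ⟨0, hN⟩

/-!
Write `J = J_{a,b}` and count paths: `(J ^ m) 0 j` vanishes for `m < j` and equals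
`√b₀ ⋯ √b_{j-1}` for `m = j`, since a path of length `j` from `0` to `j` must climb straight up.
The derivative of `(J ^ (k+1)) 0 0` in the direction of `a_c` is
`∑ᵢ (J ^ (k-i)) 0 c * (J ^ i) c 0`, and in the direction of `b_j` it is the analogous sum through
the edge `j ↔ j+1`, times `d√b_j/db_j = 1/(2√b_j)`. Hence, with the unknowns ordered
`a₀, b₀, a₁, b₁, …`, the Jacobian is lower triangular, and the diagonal entry in row `r` is
`b₀ ⋯ b_{⌊r/2⌋-1}` (at `b_j` the two orientations of the edge give `2√b_j`, which cancels the
chain-rule factor). Each `b_t` occurs in `2(N-1-t)-1` of the `2N-1` diagonal entries.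
-/

theorem Matrix.abs_det_eq_abs_prod_of_apply_perm_eq_zero {n R : Type*} [Fintype n]
    [LinearOrder n] [CommRing R] [LinearOrder R] [IsStrictOrderedRing R] (M : Matrix n n R)
    (σ : Equiv.Perm n) (h : ∀ k r, k < r → M k (σ r) = 0) :
    |M.det| = |∏ k, M k (σ k)| := by
  rw [← abs_det_submatrix_equiv_equiv (Equiv.refl n) σ, Equiv.coe_refl,
    det_of_isLowerTriangular (M.submatrix id σ) fun k r hkr => h k r hkr]
  rfl

theorem Matrix.mul_single_mul_apply {n R : Type*} [Fintype n] [DecidableEq n] [CommSemiring R]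
    (X Y : Matrix n n R) (u v a b : n) (c : R) :
    (X * single u v c * Y) a b = X a u * c * Y v b := by
  rw [mul_apply, sum_eq_single v]
  · rw [mul_single_apply_same]
  · intro s _ hs; rw [mul_single_apply_of_ne (hbj := hs), zero_mul]
  · simp

namespace JacobiMoments

section PrefixProd

variable {M : Type*} [CommMonoid M] {K : ℕ}

def prefixProd (e : Fin K → M) (m : ℕ) : M :=
  ∏ t ∈ univ.filter (fun t : Fin K => (t : ℕ) < m), e t

theorem prefixProd_zero (e : Fin K → M) : prefixProd e 0 = 1 := by
  simp [prefixProd]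

theorem prefixProd_succ (e : Fin K → M) {m : ℕ} (hm : m < K) :
    prefixProd e (m + 1) = prefixProd e m * e ⟨m, hm⟩ := by
  have : univ.filter (fun t : Fin K => (t : ℕ) < m + 1) =
      insert ⟨m, hm⟩ (univ.filter fun t : Fin K => (t : ℕ) < m) := by
    ext t
    simp only [mem_filter, mem_univ, true_and, mem_insert, Fin.ext_iff]
    omega
  rw [prefixProd, this, prod_insert (by simp), mul_comm, prefixProd]

theorem prod_prefixProd_div_two {N : ℕ} (b : Fin (N - 1) → M) :
    ∏ r : Fin (2 * N - 1), prefixProd b (r / 2) = ∏ t, b t ^ (2 * (N - 1 - t) - 1) := by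
  have hcard (t : Fin (N - 1)) :
      #(univ.filter fun r : Fin (2 * N - 1) => (t : ℕ) < r / 2) = 2 * (N - 1 - t) - 1 := by
    have : (univ.filter fun r : Fin (2 * N - 1) => (t : ℕ) < r / 2) =
        Ici ⟨2 * t + 2, by omega⟩ := by
      ext r; simp only [mem_filter, mem_univ, true_and, mem_Ici, Fin.le_def]; omega
    rw [this, Fin.card_Ici]
    change 2 * N - 1 - (2 * t + 2) = _
    omega
  simp only [prefixProd]
  rw [prod_comm' (t' := (univ : Finset (Fin (N - 1))))
    (s' := fun t => univ.filter fun r : Fin (2 * N - 1) => (t : ℕ) < r / 2) (by simp)]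
  simp [prod_const, hcard]

theorem prefixProd_sqrt_mul_self {b : Fin K → ℝ} (hb : ∀ t, 0 ≤ b t) (m : ℕ) :
    prefixProd (fun t => √(b t)) m * prefixProd (fun t => √(b t)) m = prefixProd b m := by
  simp only [prefixProd, ← prod_mul_distrib, Real.mul_self_sqrt (hb _)]

end PrefixProd

section Tridiagonal

variable {R : Type*} {N : ℕ}

def tridiag [Zero R] (d : Fin N → R) (e : Fin (N - 1) → R) : Matrix (Fin N) (Fin N) R :=
  Matrix.of fun i j =>
    if i = j then d i
    else if h : (i : ℕ) + 1 = (j : ℕ) then e ⟨i, by have := j.isLt; omega⟩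
    else if h' : (j : ℕ) + 1 = (i : ℕ) then e ⟨j, by have := i.isLt; omega⟩
    else 0

theorem jacobiMatrix_eq_tridiag (a : Fin N → ℝ) (b : Fin (N - 1) → ℝ) :
    jacobiMatrix a b = tridiag a fun n => √(b n) :=
  rfl

variable [CommSemiring R] (d : Fin N → R) (e : Fin (N - 1) → R)

theorem tridiag_transpose : (tridiag d e)ᵀ = tridiag d e := by
  ext i j
  simp only [transpose_apply, tridiag, of_apply, Fin.ext_iff]
  split_ifs <;> first | rfl | omega | (congr 1; ext; omega)

theorem tridiag_pow_apply_comm (m : ℕ) (i j : Fin N) :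
    (tridiag d e ^ m) i j = (tridiag d e ^ m) j i := by
  rw [← transpose_apply (tridiag d e ^ m), transpose_pow, tridiag_transpose]

theorem tridiag_apply_eq_zero {i j : Fin N} (h : (i : ℕ) + 1 < j) : tridiag d e i j = 0 := by
  simp only [tridiag, of_apply, Fin.ext_iff]
  split_ifs <;> first | rfl | omega

theorem tridiag_apply_succ {t : ℕ} (ht : t + 1 < N) :
    tridiag d e ⟨t, by omega⟩ ⟨t + 1, ht⟩ = e ⟨t, by omega⟩ := by
  simp only [tridiag, of_apply, Fin.ext_iff]
  split_ifs <;> first | rfl | omega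

variable (h0 : 0 < N)

theorem tridiag_pow_apply_zero_of_lt {m : ℕ} {j : Fin N} (h : m < j) :
    (tridiag d e ^ m) ⟨0, h0⟩ j = 0 := by
  induction m generalizing j with
  | zero => exact one_apply_ne (Fin.ne_of_val_ne h.ne)
  | succ m ih =>
    rw [pow_succ, mul_apply]
    refine sum_eq_zero fun s _ => ?_
    rcases lt_or_ge m s with hs | hs
    · rw [ih hs, zero_mul]
    · rw [tridiag_apply_eq_zero d e (by omega), mul_zero]

theorem tridiag_pow_apply_zero_self {m : ℕ} (hm : m < N) :
    (tridiag d e ^ m) ⟨0, h0⟩ ⟨m, hm⟩ = prefixProd e m := by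
  induction m with
  | zero => rw [pow_zero, one_apply_eq, prefixProd_zero]
  | succ m ih =>
    rw [pow_succ, mul_apply, sum_eq_single ⟨m, by omega⟩, ih, tridiag_apply_succ,
      prefixProd_succ]
    · intro s _ hs
      have hs : (s : ℕ) ≠ m := fun h => hs (Fin.ext h)
      rcases lt_or_gt_of_ne hs with hs | hs
      · rw [tridiag_apply_eq_zero d e (by simp only; omega), mul_zero]
      · rw [tridiag_pow_apply_zero_of_lt d e h0 hs, zero_mul]
    · simp

theorem sum_tridiag_pow_apply_mul_of_lt {k u v : ℕ} (hu : u < N) (hv : v < N) (h : k < u + v) :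
    ∑ i ∈ range (k + 1), (tridiag d e ^ (k - i)) ⟨0, h0⟩ ⟨u, hu⟩ *
      (tridiag d e ^ i) ⟨v, hv⟩ ⟨0, h0⟩ = 0 := by
  refine sum_eq_zero fun i hik => ?_
  have := mem_range.1 hik
  rcases lt_or_ge (k - i) u with hi | hi
  · rw [tridiag_pow_apply_zero_of_lt d e h0 hi, zero_mul]
  · refine mul_eq_zero_of_right _ ?_
    rw [tridiag_pow_apply_comm]
    exact tridiag_pow_apply_zero_of_lt d e h0 (by simp only; omega)

theorem sum_tridiag_pow_apply_mul_of_eq {k u v : ℕ} (hu : u < N) (hv : v < N) (h : k = u + v) :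
    ∑ i ∈ range (k + 1), (tridiag d e ^ (k - i)) ⟨0, h0⟩ ⟨u, hu⟩ *
      (tridiag d e ^ i) ⟨v, hv⟩ ⟨0, h0⟩ = prefixProd e u * prefixProd e v := by
  rw [sum_eq_single v, tridiag_pow_apply_comm d e v, show k - v = u by omega,
    tridiag_pow_apply_zero_self, tridiag_pow_apply_zero_self]
  · intro i hik hi
    have := mem_range.1 hik
    rcases lt_or_gt_of_ne hi with hi | hi
    · refine mul_eq_zero_of_right _ ?_
      rw [tridiag_pow_apply_comm]
      exact tridiag_pow_apply_zero_of_lt d e h0 (by simp only; omega)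
    · exact mul_eq_zero_of_left (tridiag_pow_apply_zero_of_lt d e h0 (by simp only; omega)) _
  · simp; omega

end Tridiagonal

section Derivative

def tridiagLinear (N : ℕ) : (Fin (2 * N - 1) → ℝ) →ₗ[ℝ] Matrix (Fin N) (Fin N) ℝ where
  toFun q := tridiag (xPart q) (wPart q)
  map_add' q q' := by
    ext i j
    simp only [tridiag, xPart, wPart, of_apply, Matrix.add_apply, Pi.add_apply]
    split_ifs <;> simp
  map_smul' c q := by
    ext i j
    simp only [tridiag, xPart, wPart, of_apply, Matrix.smul_apply, Pi.smul_apply, smul_eq_mul,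
      RingHom.id_apply]
    split_ifs <;> simp

variable {N : ℕ}

def sqrtWPart (p : Fin (2 * N - 1) → ℝ) : Fin (2 * N - 1) → ℝ :=
  fun l => if (l : ℕ) < N then p l else √(p l)

def sqrtWPartScale (p : Fin (2 * N - 1) → ℝ) (l : Fin (2 * N - 1)) : ℝ :=
  if (l : ℕ) < N then 1 else 1 / (2 * √(p l))

theorem jacobiMatrix_eq_tridiagLinear (p : Fin (2 * N - 1) → ℝ) :
    jacobiMatrix (xPart p) (wPart p) = tridiagLinear N (sqrtWPart p) := by
  have hx : xPart (sqrtWPart p) = xPart p := by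
    ext i; simp [xPart, sqrtWPart]
  have hw : wPart (sqrtWPart p) = fun i => √(wPart p i) := by
    ext i; simp [wPart, sqrtWPart]
  rw [jacobiMatrix_eq_tridiag, ← hx, ← hw]
  rfl

theorem apply_pos_of_wPart_pos {p : Fin (2 * N - 1) → ℝ} (hp : ∀ i, 0 < wPart p i)
    {l : Fin (2 * N - 1)} (hl : ¬ (l : ℕ) < N) : 0 < p l := by
  simpa [wPart, Nat.add_sub_cancel' (not_lt.1 hl)] using hp ⟨l - N, by omega⟩

theorem hasFDerivAt_sqrtWPart {p : Fin (2 * N - 1) → ℝ} (hp : ∀ i, 0 < wPart p i) :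
    HasFDerivAt sqrtWPart
      (ContinuousLinearMap.pi fun l =>
        sqrtWPartScale p l • ContinuousLinearMap.proj (R := ℝ) (φ := fun _ => ℝ) l) p := by
  refine hasFDerivAt_pi.2 fun l => ?_
  by_cases hl : (l : ℕ) < N
  · simpa [sqrtWPart, sqrtWPartScale, hl] using hasFDerivAt_apply l p
  · simpa [sqrtWPart, sqrtWPartScale, hl] using
      (hasFDerivAt_apply l p).sqrt (apply_pos_of_wPart_pos hp hl).ne'

theorem contDiffOn_sqrtWPart {n : WithTop ℕ∞} :
    ContDiffOn ℝ n (sqrtWPart (N := N)) {p | ∀ i, 0 < wPart p i} := by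
  refine contDiffOn_pi.2 fun l => ?_
  by_cases hl : (l : ℕ) < N
  · simp only [sqrtWPart, hl, if_true]
    exact (contDiff_apply ℝ ℝ l).contDiffOn
  · simp only [sqrtWPart, hl, if_false]
    exact (contDiff_apply ℝ ℝ l).contDiffOn.sqrt fun p hp => (apply_pos_of_wPart_pos hp hl).ne'

end Derivative

section MomentMap

-- Matrices carry no global norm, so powers are differentiated in the normed algebra of operators.
def tridiagOp (N : ℕ) :
    (Fin (2 * N - 1) → ℝ) →L[ℝ] (EuclideanSpace ℝ (Fin N) →L[ℝ] EuclideanSpace ℝ (Fin N)) :=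
  LinearMap.toContinuousLinearMap
    { toFun q := toEuclideanCLM (𝕜 := ℝ) (tridiagLinear N q)
      map_add' q q' := by simp
      map_smul' c q := by simp }

variable {N : ℕ} (h0 : 0 < N)

theorem tridiagOp_apply (q : Fin (2 * N - 1) → ℝ) :
    tridiagOp N q = toEuclideanCLM (𝕜 := ℝ) (tridiagLinear N q) :=
  rfl

def entryZeroCLM : (EuclideanSpace ℝ (Fin N) →L[ℝ] EuclideanSpace ℝ (Fin N)) →L[ℝ] ℝ :=
  (EuclideanSpace.proj ⟨0, h0⟩).comp
    (ContinuousLinearMap.apply ℝ _ (EuclideanSpace.single ⟨0, h0⟩ 1))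

theorem entryZeroCLM_toEuclideanCLM (A : Matrix (Fin N) (Fin N) ℝ) :
    entryZeroCLM h0 (toEuclideanCLM (𝕜 := ℝ) A) = A ⟨0, h0⟩ ⟨0, h0⟩ := by
  simp [entryZeroCLM, EuclideanSpace.single]

theorem jacobiMomentMap_eq :
    jacobiMomentMap N h0 = fun p (k : Fin (2 * N - 1)) =>
      entryZeroCLM h0 (tridiagOp N (sqrtWPart p) ^ ((k : ℕ) + 1)) := by
  ext p k
  rw [jacobiMomentMap, jacobiMatrix_eq_tridiagLinear, tridiagOp_apply,
    ← map_pow (toEuclideanCLM (𝕜 := ℝ) (n := Fin N)), entryZeroCLM_toEuclideanCLM]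

theorem contDiffOn_jacobiMomentMap {n : WithTop ℕ∞} :
    ContDiffOn ℝ n (jacobiMomentMap N h0) {p | ∀ i, 0 < wPart p i} := by
  rw [jacobiMomentMap_eq]
  exact contDiffOn_pi.2 fun k => (entryZeroCLM h0).contDiff.comp_contDiffOn
    (((tridiagOp N).contDiff.comp_contDiffOn contDiffOn_sqrtWPart).pow _)

theorem toMatrix'_fderiv_jacobiMomentMap {p : Fin (2 * N - 1) → ℝ} (hp : ∀ i, 0 < wPart p i)
    (k l : Fin (2 * N - 1)) :
    LinearMap.toMatrix' (fderiv ℝ (jacobiMomentMap N h0) p).toLinearMap k l =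
      sqrtWPartScale p l * ∑ i ∈ range ((k : ℕ) + 1),
        (jacobiMatrix (xPart p) (wPart p) ^ ((k : ℕ) - i) * tridiagLinear N (Pi.single l 1) *
          jacobiMatrix (xPart p) (wPart p) ^ i) ⟨0, h0⟩ ⟨0, h0⟩ := by
  have hJ := (tridiagOp N).hasFDerivAt.comp p (hasFDerivAt_sqrtWPart hp)
  have hF := hasFDerivAt_pi.2 fun k : Fin (2 * N - 1) =>
    (entryZeroCLM h0).hasFDerivAt.comp p (hJ.fun_pow' ((k : ℕ) + 1))
  simp only [Function.comp_def] at hF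
  have hD : (ContinuousLinearMap.pi fun l' => sqrtWPartScale p l' •
      ContinuousLinearMap.proj (R := ℝ) (φ := fun _ => ℝ) l') (Pi.single l 1) =
      sqrtWPartScale p l • Pi.single l 1 := by
    ext l'; by_cases h : l' = l <;> simp [h]
  rw [jacobiMomentMap_eq, hF.fderiv, LinearMap.toMatrix'_apply, ContinuousLinearMap.coe_coe,
    ContinuousLinearMap.pi_apply, ContinuousLinearMap.comp_apply, _root_.sum_apply, map_sum,
    mul_sum]
  refine sum_congr rfl fun i _ => ?_
  rw [_root_.smul_apply, _root_.smul_apply, ContinuousLinearMap.comp_apply, hD,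
    ContinuousLinearMap.map_smul, op_smul_eq_mul, smul_eq_mul, tridiagOp_apply, tridiagOp_apply,
    ← map_smul (toEuclideanCLM (𝕜 := ℝ) (n := Fin N)),
    ← map_pow (toEuclideanCLM (𝕜 := ℝ) (n := Fin N)),
    ← map_pow (toEuclideanCLM (𝕜 := ℝ) (n := Fin N)),
    ← map_mul (toEuclideanCLM (𝕜 := ℝ) (n := Fin N)),
    ← map_mul (toEuclideanCLM (𝕜 := ℝ) (n := Fin N)), entryZeroCLM_toEuclideanCLM,
    Matrix.mul_smul, Matrix.smul_mul, Matrix.smul_apply, smul_eq_mul,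
    jacobiMatrix_eq_tridiagLinear, Nat.pred_succ]

end MomentMap

section Jacobian

-- Position `2c` holds the coordinate of `a_c`, position `2j+1` that of `b_j`.
def interleave (N : ℕ) : Equiv.Perm (Fin (2 * N - 1)) where
  toFun r := if h : (r : ℕ) % 2 = 0 then ⟨r / 2, by omega⟩
    else ⟨N + r / 2, by have := r.isLt; omega⟩
  invFun l := if h : (l : ℕ) < N then ⟨2 * l, by omega⟩
    else ⟨2 * (l - N) + 1, by have := l.isLt; omega⟩
  left_inv r := by
    have := r.isLt
    dsimp only
    split_ifs with h1 h2 h2 <;> ext <;> simp only at h2 ⊢ <;> omega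
  right_inv l := by
    have := l.isLt
    dsimp only
    split_ifs with h1 h2 h2 <;> ext <;> simp only at h2 ⊢ <;> omega

variable {N : ℕ}

theorem tridiagLinear_single_of_lt {c : ℕ} (hc : c < N) :
    tridiagLinear N (Pi.single ⟨c, by omega⟩ 1) = single ⟨c, hc⟩ ⟨c, hc⟩ 1 := by
  ext a b
  have := a.isLt
  simp only [tridiagLinear, LinearMap.coe_mk, AddHom.coe_mk, tridiag, xPart, wPart, of_apply,
    single_apply, Pi.single_apply, Fin.ext_iff]
  split_ifs <;> first | rfl | omega

theorem tridiagLinear_single_of_ge {j : ℕ} (hj : j + 1 < N) :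
    tridiagLinear N (Pi.single ⟨N + j, by omega⟩ 1) =
      single ⟨j, by omega⟩ ⟨j + 1, hj⟩ 1 + single ⟨j + 1, hj⟩ ⟨j, by omega⟩ 1 := by
  ext a b
  have := a.isLt
  simp only [tridiagLinear, LinearMap.coe_mk, AddHom.coe_mk, tridiag, xPart, wPart, of_apply,
    Matrix.add_apply, single_apply, Pi.single_apply, Fin.ext_iff]
  split_ifs <;> first | rfl | omega | norm_num

theorem interleave_of_even {r : Fin (2 * N - 1)} (hr : (r : ℕ) % 2 = 0) :
    interleave N r = ⟨r / 2, by omega⟩ :=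
  dif_pos hr

theorem interleave_of_odd {r : Fin (2 * N - 1)} (hr : (r : ℕ) % 2 = 1) :
    interleave N r = ⟨N + r / 2, by have := r.isLt; omega⟩ :=
  dif_neg (by omega)

variable (h0 : 0 < N) {p : Fin (2 * N - 1) → ℝ} (hp : ∀ i, 0 < wPart p i)
include hp

theorem toMatrix'_fderiv_jacobiMomentMap_of_lt (k : Fin (2 * N - 1)) {c : ℕ} (hc : c < N) :
    LinearMap.toMatrix' (fderiv ℝ (jacobiMomentMap N h0) p).toLinearMap k ⟨c, by omega⟩ =
      ∑ i ∈ range ((k : ℕ) + 1),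
        (tridiag (xPart p) (fun i => √(wPart p i)) ^ ((k : ℕ) - i)) ⟨0, h0⟩ ⟨c, hc⟩ *
          (tridiag (xPart p) (fun i => √(wPart p i)) ^ i) ⟨c, hc⟩ ⟨0, h0⟩ := by
  rw [toMatrix'_fderiv_jacobiMomentMap h0 hp, sqrtWPartScale, if_pos hc, one_mul,
    tridiagLinear_single_of_lt hc, jacobiMatrix_eq_tridiag]
  simp only [mul_single_mul_apply, mul_one]

theorem toMatrix'_fderiv_jacobiMomentMap_of_ge (k : Fin (2 * N - 1)) {j : ℕ} (hj : j + 1 < N) :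
    LinearMap.toMatrix' (fderiv ℝ (jacobiMomentMap N h0) p).toLinearMap k ⟨N + j, by omega⟩ =
      1 / (2 * √(wPart p ⟨j, by omega⟩)) *
        (∑ i ∈ range ((k : ℕ) + 1),
          (tridiag (xPart p) (fun i => √(wPart p i)) ^ ((k : ℕ) - i)) ⟨0, h0⟩ ⟨j, by omega⟩ *
            (tridiag (xPart p) (fun i => √(wPart p i)) ^ i) ⟨j + 1, hj⟩ ⟨0, h0⟩ +
        ∑ i ∈ range ((k : ℕ) + 1),
          (tridiag (xPart p) (fun i => √(wPart p i)) ^ ((k : ℕ) - i)) ⟨0, h0⟩ ⟨j + 1, hj⟩ *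
            (tridiag (xPart p) (fun i => √(wPart p i)) ^ i) ⟨j, by omega⟩ ⟨0, h0⟩) := by
  rw [toMatrix'_fderiv_jacobiMomentMap h0 hp, sqrtWPartScale, if_neg (by simp only; omega),
    tridiagLinear_single_of_ge hj, jacobiMatrix_eq_tridiag, ← sum_add_distrib]
  simp only [mul_add, add_mul, Matrix.add_apply, mul_single_mul_apply, mul_one]
  rfl

theorem toMatrix'_fderiv_jacobiMomentMap_interleave_of_lt {k r : Fin (2 * N - 1)}
    (h : k < r) :
    LinearMap.toMatrix' (fderiv ℝ (jacobiMomentMap N h0) p).toLinearMap k (interleave N r) =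
      0 := by
  have h' : (k : ℕ) < r := h
  rcases Nat.mod_two_eq_zero_or_one r with hr | hr
  · rw [interleave_of_even hr, toMatrix'_fderiv_jacobiMomentMap_of_lt h0 hp k (by omega)]
    exact sum_tridiag_pow_apply_mul_of_lt _ _ h0 _ _ (by omega)
  · rw [interleave_of_odd (by omega), toMatrix'_fderiv_jacobiMomentMap_of_ge h0 hp k (by omega),
      sum_tridiag_pow_apply_mul_of_lt _ _ h0 _ _ (by omega),
      sum_tridiag_pow_apply_mul_of_lt _ _ h0 _ _ (by omega), add_zero, mul_zero]

theorem toMatrix'_fderiv_jacobiMomentMap_interleave_self (r : Fin (2 * N - 1)) :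
    LinearMap.toMatrix' (fderiv ℝ (jacobiMomentMap N h0) p).toLinearMap r (interleave N r) =
      prefixProd (wPart p) (r / 2) := by
  have hb : ∀ t, 0 ≤ wPart p t := fun t => (hp t).le
  rcases Nat.mod_two_eq_zero_or_one r with hr | hr
  · rw [interleave_of_even hr, toMatrix'_fderiv_jacobiMomentMap_of_lt h0 hp r (by omega),
      sum_tridiag_pow_apply_mul_of_eq _ _ h0 _ _ (by omega), prefixProd_sqrt_mul_self hb]
  · have hj : (r : ℕ) / 2 < N - 1 := by omega
    have hsqrt : √(wPart p ⟨r / 2, hj⟩) ≠ 0 := (Real.sqrt_pos.2 (hp _)).ne'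
    rw [interleave_of_odd (by omega), toMatrix'_fderiv_jacobiMomentMap_of_ge h0 hp r (by omega),
      sum_tridiag_pow_apply_mul_of_eq _ _ h0 _ _ (by omega),
      sum_tridiag_pow_apply_mul_of_eq _ _ h0 _ _ (by omega), prefixProd_succ _ hj,
      ← prefixProd_sqrt_mul_self hb]
    field_simp
    ring

end Jacobian

end JacobiMoments

open JacobiMoments

/-- Jacobian of the map from Jacobi coefficients to moments. -/
theorem jacobi_to_moments_jacobian (N : ℕ) (hN : 2 ≤ N) :
    ContDiffOn ℝ 1 (jacobiMomentMap N (by omega))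
      {p : Fin (2 * N - 1) → ℝ | ∀ i, 0 < wPart p i} ∧
    ∀ p ∈ {p : Fin (2 * N - 1) → ℝ | ∀ i, 0 < wPart p i},
      |LinearMap.det (fderiv ℝ (jacobiMomentMap N (by omega)) p).toLinearMap|
        = ∏ i : Fin (N - 1), wPart p i ^ (2 * (N - 1 - (i : ℕ)) - 1) := by
  have h0 : 0 < N := by omega
  refine ⟨contDiffOn_jacobiMomentMap h0, fun p hp => ?_⟩
  rw [← LinearMap.det_toMatrix',
    abs_det_eq_abs_prod_of_apply_perm_eq_zero _ (interleave N)
      fun k r h => toMatrix'_fderiv_jacobiMomentMap_interleave_of_lt h0 hp h]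
  simp only [toMatrix'_fderiv_jacobiMomentMap_interleave_self h0 hp, prod_prefixProd_div_two]
  exact abs_of_pos (prod_pos fun i _ => pow_pos (hp i) _)
end
end

section
/- Fix an integer N ≥ 2. For ξ ∈ (0,∞)^{2N−1}, let Ξ be the N×N lower bidiagonal matrix with diagonal entries √ξ_1, √ξ_3, …, √ξ_{2N−1} and subdiagonal entries Ξ_{n+1,n} = √ξ_{2n}, and define a_1 = ξ_1, a_n = ξ_{2n−2} + ξ_{2n−1} for 2 ≤ n ≤ N, and b_n = ξ_{2n−1} ξ_{2n} for 1 ≤ n ≤ N−1; then Ξ Ξᵀ = J_{a,b}. Conversely, if a ∈ ℝ^N and b ∈ (0,∞)^{N−1} are such that J_{a,b} is positive definite, then there is a unique ξ ∈ (0,∞)^{2N−1} with J_{a,b} = Ξ Ξᵀ for the above bidiagonal Ξ. Moreover, the polynomial map ξ ↦ (a_1,…,a_N, b_1,…,b_{N−1}) is injective and continuously differentiable on (0,∞)^{2N−1}, and at every point the absolute value of the determinant of its derivative equals ∏_{i=1}^{N−1} ξ_{2i−1}. -/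
open MeasureTheory ProbabilityTheory Matrix Finset Real
open scoped ENNReal NNReal

noncomputable section

/-- The map from the parameters `ξ` to the rolled-up Jacobi data `(a, b)`. -/
def xiToAB (N : ℕ) (ξ : Fin (2 * N - 1) → ℝ) : Fin (2 * N - 1) → ℝ :=
  fun k =>
    if h : (k : ℕ) < N then xiToA ξ ⟨k, h⟩
    else xiToB ξ ⟨(k : ℕ) - N, by have := k.isLt; omega⟩

/-!
The entries of `Ξ Ξᵀ = J_{a,b}` determine `ξ` recursively: with 0-based indices `ξ₀ = a₀`,
`ξ_{2n+1} = b_n / ξ_{2n}` and `ξ_{2n+2} = a_{n+1} - ξ_{2n+1}`, so the `ξ_{2n}` are the pivots `d_n`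
of Gaussian elimination on `J_{a,b}`. They are positive when `J_{a,b}` is positive definite:
completing squares writes the quadratic form of the leading `(n + 1) × (n + 1)` block as a sum of
squares plus `d_n v_n²`, and some `v` with `v_n = 1` makes all the squares vanish.

Listed in the order `a₀, b₀, a₁, b₁, …`, the `r`-th coefficient depends only on `ξ₀, …, ξ_r`, and
affinely on `ξ_r` with slope `1` (for an `a`) or `ξ_{r-1}` (for a `b`). This triangular structure
makes the map injective on vectors without zero entries, and its Jacobian matrix lower triangular
after a permutation of the rows, with determinant `± ∏ ξ_{2n}`.
-/

lemma Fin.extend_val_apply {α : Type*} {n : ℕ} (v : Fin n → α) {e : ℕ → α} {i : ℕ}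
    (hi : i < n) : Function.extend Fin.val v e i = v ⟨i, hi⟩ :=
  Fin.val_injective.extend_apply v e ⟨i, hi⟩

lemma Fin.sum_univ_eq_sum_range_of_support {M : Type*} [AddCommMonoid M] (f : ℕ → M)
    {n N : ℕ} (hn : n < N) (hf : ∀ i, n < i → f i = 0) :
    ∑ i : Fin N, f i = ∑ i ∈ range (n + 1), f i := by
  rw [Fin.sum_univ_eq_sum_range, Finset.sum_subset (Finset.range_subset_range.mpr hn)]
  intro i _ hi
  exact hf i (by simpa using hi)

section Bidiagonal

variable {N : ℕ} (ξ : Fin (2 * N - 1) → ℝ)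

lemma bidiag_apply_self (i : Fin N) : bidiag ξ i i = √(ξ ⟨2 * i, by omega⟩) := by
  simp [bidiag]

lemma bidiag_apply_of_succ_eq {i k : Fin N} (h : (k : ℕ) + 1 = i) :
    bidiag ξ i k = √(ξ ⟨2 * k + 1, by omega⟩) := by
  have hik : i ≠ k := by rintro rfl; omega
  simp [bidiag, h, hik]

lemma bidiag_apply_eq_zero {i k : Fin N} (h₁ : i ≠ k) (h₂ : (k : ℕ) + 1 ≠ i) :
    bidiag ξ i k = 0 := by
  simp [bidiag, h₁, h₂]

lemma bidiag_mul_transpose_apply_self (hξ : ∀ i, 0 ≤ ξ i) (i : Fin N) :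
    (bidiag ξ * (bidiag ξ)ᵀ) i i = xiToA ξ i := by
  have hsq k : √(ξ k) * √(ξ k) = ξ k := Real.mul_self_sqrt (hξ k)
  simp only [mul_apply, transpose_apply]
  by_cases hi : (i : ℕ) = 0
  · rw [Fintype.sum_eq_single i fun k hk => by
      rw [bidiag_apply_eq_zero ξ (Ne.symm hk) (by omega), zero_mul]]
    simp [xiToA, hi, bidiag_apply_self, hsq]
  · set i' : Fin N := ⟨i - 1, by omega⟩
    have hi' : (i' : ℕ) + 1 = i := by simp only [i']; omega
    rw [Fintype.sum_eq_add i i' (fun h => by rw [Fin.ext_iff] at h; omega) fun k hk => by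
      rw [bidiag_apply_eq_zero ξ (Ne.symm hk.1) fun h => hk.2 (Fin.ext (by omega)), zero_mul]]
    rw [bidiag_apply_self, bidiag_apply_of_succ_eq ξ hi', hsq, hsq, xiToA, dif_neg hi, add_comm]
    congr 3
    omega

lemma bidiag_mul_transpose_apply_of_succ_eq (hξ : ∀ i, 0 ≤ ξ i) {i j : Fin N}
    (h : (i : ℕ) + 1 = j) :
    (bidiag ξ * (bidiag ξ)ᵀ) i j = √(xiToB ξ ⟨i, by omega⟩) := by
  simp only [mul_apply, transpose_apply]
  rw [Fintype.sum_eq_single i fun k hk => by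
    by_cases hk' : (k : ℕ) + 1 = i
    · rw [bidiag_apply_eq_zero ξ (i := j) (by rintro rfl; omega) (by omega), mul_zero]
    · rw [bidiag_apply_eq_zero ξ (Ne.symm hk) hk', zero_mul]]
  rw [bidiag_apply_self, bidiag_apply_of_succ_eq ξ h, xiToB, Real.sqrt_mul (hξ _)]

lemma bidiag_mul_transpose_apply_of_succ_lt {i j : Fin N} (h : (i : ℕ) + 1 < j) :
    (bidiag ξ * (bidiag ξ)ᵀ) i j = 0 := by
  rw [mul_apply]
  refine Finset.sum_eq_zero fun k _ => ?_
  by_cases hk : (k : ℕ) = j ∨ (k : ℕ) + 1 = j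
  · rw [transpose_apply, bidiag_apply_eq_zero ξ (i := i) (by rintro rfl; omega) (by omega),
      zero_mul]
  · rw [transpose_apply, bidiag_apply_eq_zero ξ (i := j) (by rintro rfl; omega) (by omega),
      mul_zero]

theorem bidiag_mul_transpose (hξ : ∀ i, 0 ≤ ξ i) :
    bidiag ξ * (bidiag ξ)ᵀ = jacobiMatrix (xiToA ξ) (xiToB ξ) := by
  ext i j
  wlog hij : (i : ℕ) ≤ j generalizing i j
  · rw [← (mul_transpose_isHermitian _).apply, ← (jacobiMatrix_isHermitian _ _).apply,
      this j i (by omega)]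
  obtain rfl | h | h : i = j ∨ (i : ℕ) + 1 = j ∨ (i : ℕ) + 1 < j := by
    rw [Fin.ext_iff]
    omega
  · simp [bidiag_mul_transpose_apply_self ξ hξ, jacobiMatrix]
  · have hne : i ≠ j := by rintro rfl; omega
    simp [bidiag_mul_transpose_apply_of_succ_eq ξ hξ h, jacobiMatrix, hne, h]
  · have hne : i ≠ j := by rintro rfl; omega
    simp [bidiag_mul_transpose_apply_of_succ_lt ξ h, jacobiMatrix, hne,
      show (i : ℕ) + 1 ≠ j by omega, show (j : ℕ) + 1 ≠ i by omega]

end Bidiagonal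

section Pivots

variable (A B : ℕ → ℝ)

def tridiagPivot : ℕ → ℝ
  | 0 => A 0
  | n + 1 => A (n + 1) - B n / tridiagPivot n

def tridiagEntry (i j : ℕ) : ℝ :=
  if i = j then A i else if i + 1 = j then √(B i) else if j + 1 = i then √(B j) else 0

def tridiagQuadForm (v : ℕ → ℝ) (t : ℕ) : ℝ :=
  ∑ i ∈ range (t + 1), ∑ j ∈ range (t + 1), v i * tridiagEntry A B i j * v j

lemma tridiagQuadForm_succ (v : ℕ → ℝ) (t : ℕ) :
    tridiagQuadForm A B v (t + 1) =
      tridiagQuadForm A B v t + 2 * √(B t) * v t * v (t + 1) + A (t + 1) * v (t + 1) ^ 2 := by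
  have hcol : ∑ i ∈ range (t + 1), v i * tridiagEntry A B i (t + 1) * v (t + 1) =
      v t * √(B t) * v (t + 1) := by
    rw [Finset.sum_eq_single_of_mem t (by simp)]
    · simp [tridiagEntry]
    · intro i hi hit
      simp only [Finset.mem_range] at hi
      simp [tridiagEntry, hit, show i ≠ t + 1 by omega, show t + 1 + 1 ≠ i by omega]
  have hrow : ∑ j ∈ range (t + 1), v (t + 1) * tridiagEntry A B (t + 1) j * v j =
      v (t + 1) * √(B t) * v t := by
    rw [Finset.sum_eq_single_of_mem t (by simp)]
    · simp [tridiagEntry, show t + 1 + 1 ≠ t by omega]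
    · intro j hj hjt
      simp only [Finset.mem_range] at hj
      simp [tridiagEntry, hjt, show t + 1 ≠ j by omega, show t + 1 + 1 ≠ j by omega]
  simp only [tridiagQuadForm, Finset.sum_range_succ _ (t + 1), Finset.sum_add_distrib, hcol,
    hrow]
  simp [tridiagEntry]
  ring

theorem tridiagQuadForm_eq_sum_sq_add (v : ℕ → ℝ) (t : ℕ)
    (hd : ∀ i < t, 0 < tridiagPivot A B i) (hB : ∀ i < t, 0 ≤ B i) :
    tridiagQuadForm A B v t =
      ∑ i ∈ range t, (√(tridiagPivot A B i) * v i + √(B i / tridiagPivot A B i) * v (i + 1)) ^ 2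
        + tridiagPivot A B t * v t ^ 2 := by
  induction t with
  | zero => simp [tridiagQuadForm, tridiagEntry, tridiagPivot]; ring
  | succ t ih =>
    have hdt := hd t (by omega)
    have hBt := hB t (by omega)
    have hsqrt : √(B t) = √(tridiagPivot A B t) * √(B t / tridiagPivot A B t) := by
      rw [← Real.sqrt_mul hdt.le, mul_div_cancel₀ _ hdt.ne']
    rw [tridiagQuadForm_succ, ih (fun i hi => hd i (by omega)) (fun i hi => hB i (by omega)),
      Finset.sum_range_succ, tridiagPivot, add_sq, mul_pow, mul_pow, Real.sq_sqrt hdt.le,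
      Real.sq_sqrt (div_nonneg hBt hdt.le), hsqrt]
    ring

-- The solution of `Lᵀ v = eₙ` for the unit lower bidiagonal `L` of `J = L D Lᵀ`: it makes all
-- the squares in `tridiagQuadForm_eq_sum_sq_add` vanish.
def tridiagTestVec (n i : ℕ) : ℝ :=
  if i ≤ n then ∏ j ∈ Ico i n, -(√(B j / tridiagPivot A B j) / √(tridiagPivot A B j)) else 0

lemma tridiagTestVec_self (n : ℕ) : tridiagTestVec A B n n = 1 := by
  simp [tridiagTestVec]

lemma tridiagTestVec_of_lt {n i : ℕ} (h : n < i) : tridiagTestVec A B n i = 0 :=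
  if_neg (by omega)

lemma sqrt_pivot_mul_tridiagTestVec_add {n i : ℕ} (hi : i < n) (hd : 0 < tridiagPivot A B i) :
    √(tridiagPivot A B i) * tridiagTestVec A B n i +
      √(B i / tridiagPivot A B i) * tridiagTestVec A B n (i + 1) = 0 := by
  rw [tridiagTestVec, tridiagTestVec, if_pos hi.le, if_pos (Nat.succ_le_of_lt hi),
    Finset.prod_eq_prod_Ico_succ_bot hi]
  field_simp
  ring

theorem tridiagQuadForm_tridiagTestVec (n : ℕ) (hd : ∀ i < n, 0 < tridiagPivot A B i)
    (hB : ∀ i < n, 0 ≤ B i) :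
    tridiagQuadForm A B (tridiagTestVec A B n) n = tridiagPivot A B n := by
  rw [tridiagQuadForm_eq_sum_sq_add A B _ n hd hB, tridiagTestVec_self, Finset.sum_eq_zero]
  · ring
  · intro i hi
    rw [Finset.mem_range] at hi
    rw [sqrt_pivot_mul_tridiagTestVec_add A B hi (hd i hi)]
    ring

end Pivots

section JacobiMatrix

variable {N : ℕ} {a : Fin N → ℝ} {b : Fin (N - 1) → ℝ}

lemma jacobiMatrix_apply_eq_tridiagEntry (i j : Fin N) :
    jacobiMatrix a b i j =
      tridiagEntry (Function.extend Fin.val a 0) (Function.extend Fin.val b 0) i j := by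
  simp only [jacobiMatrix, tridiagEntry, of_apply, Fin.ext_iff]
  have := i.isLt
  have := j.isLt
  split_ifs
  · exact (Fin.val_injective.extend_apply a 0 i).symm
  · rw [Fin.extend_val_apply b (by omega)]
  · rw [Fin.extend_val_apply b (by omega)]
  · rfl

theorem dotProduct_jacobiMatrix_mulVec (v : ℕ → ℝ) {n : ℕ} (hn : n < N)
    (hv : ∀ i, n < i → v i = 0) :
    (fun i : Fin N => v i) ⬝ᵥ (jacobiMatrix a b *ᵥ fun i : Fin N => v i) =
      tridiagQuadForm (Function.extend Fin.val a 0) (Function.extend Fin.val b 0) v n := by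
  set E := tridiagEntry (Function.extend Fin.val a 0) (Function.extend Fin.val b 0)
  simp only [dotProduct, mulVec, jacobiMatrix_apply_eq_tridiagEntry]
  rw [tridiagQuadForm, Fin.sum_univ_eq_sum_range_of_support
    (fun i => v i * ∑ j : Fin N, E i j * v j) hn fun i hi => by simp [hv i hi]]
  refine Finset.sum_congr rfl fun i _ => ?_
  rw [Fin.sum_univ_eq_sum_range_of_support (fun j => E i j * v j) hn fun j hj => by simp [hv j hj],
    Finset.mul_sum]
  exact Finset.sum_congr rfl fun j _ => by ring

theorem tridiagPivot_pos_of_posDef (hb : ∀ i, 0 ≤ b i) (hJ : (jacobiMatrix a b).PosDef)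
    {n : ℕ} (hn : n < N) :
    0 < tridiagPivot (Function.extend Fin.val a 0) (Function.extend Fin.val b 0) n := by
  induction n using Nat.strong_induction_on with
  | _ n ih =>
    have hB : ∀ i < n, 0 ≤ Function.extend Fin.val b 0 i := fun i hi => by
      rw [Fin.extend_val_apply b (by omega)]; exact hb _
    set A := Function.extend Fin.val a 0
    set B := Function.extend Fin.val b 0
    have hne : (fun i : Fin N => tridiagTestVec A B n i) ≠ 0 := fun h => by
      simpa [tridiagTestVec_self] using congrFun h ⟨n, hn⟩
    have hpos := hJ.dotProduct_mulVec_pos hne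
    rwa [star_trivial, dotProduct_jacobiMatrix_mulVec _ hn fun i => tridiagTestVec_of_lt A B,
      tridiagQuadForm_tridiagTestVec A B n (fun i hi => ih i hi (by omega)) hB] at hpos

theorem jacobiMatrix_inj {a' : Fin N → ℝ} {b' : Fin (N - 1) → ℝ} (hb : ∀ i, 0 ≤ b i)
    (hb' : ∀ i, 0 ≤ b' i) : jacobiMatrix a b = jacobiMatrix a' b' ↔ a = a' ∧ b = b' := by
  refine ⟨fun h => ⟨funext fun i => ?_, funext fun i => ?_⟩, by rintro ⟨rfl, rfl⟩; rfl⟩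
  · simpa [jacobiMatrix] using congrFun₂ h i i
  · have hi := i.isLt
    have := congrFun₂ h ⟨i, by omega⟩ ⟨i + 1, by omega⟩
    simp only [jacobiMatrix_apply_eq_tridiagEntry, tridiagEntry, Fin.extend_val_apply _ hi] at this
    simpa [Real.sqrt_inj (hb i) (hb' i)] using this

end JacobiMatrix

section Existence

variable {N : ℕ} {a : Fin N → ℝ} {b : Fin (N - 1) → ℝ}

def pivotXi (A B : ℕ → ℝ) (k : ℕ) : ℝ :=
  if Even k then tridiagPivot A B (k / 2) else B (k / 2) / tridiagPivot A B (k / 2)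

lemma pivotXi_two_mul (A B : ℕ → ℝ) (m : ℕ) : pivotXi A B (2 * m) = tridiagPivot A B m := by
  simp [pivotXi]

lemma pivotXi_two_mul_add_one (A B : ℕ → ℝ) (m : ℕ) :
    pivotXi A B (2 * m + 1) = B m / tridiagPivot A B m := by
  simp [pivotXi, show (2 * m + 1) / 2 = m by omega]

theorem exists_pos_xiToA_xiToB (hb : ∀ i, 0 < b i) (hJ : (jacobiMatrix a b).PosDef) :
    ∃ ξ : Fin (2 * N - 1) → ℝ, (∀ i, 0 < ξ i) ∧ xiToA ξ = a ∧ xiToB ξ = b := by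
  have hd n (hn : n < N) := tridiagPivot_pos_of_posDef (fun i => (hb i).le) hJ hn
  refine ⟨fun k => pivotXi (Function.extend Fin.val a 0) (Function.extend Fin.val b 0) k,
    fun k => ?_, funext fun n => ?_, funext fun n => ?_⟩
  · have := k.isLt
    obtain ⟨m, hm | hm⟩ := Nat.even_or_odd' (k : ℕ) <;> simp only [hm]
    · rw [pivotXi_two_mul]
      exact hd m (by omega)
    · rw [pivotXi_two_mul_add_one, Fin.extend_val_apply b (by omega)]
      exact div_pos (hb _) (hd m (by omega))
  · obtain ⟨n, hn⟩ := n
    simp only [xiToA]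
    split_ifs with h0
    · subst h0
      simpa [pivotXi, tridiagPivot] using Fin.extend_val_apply a hn
    · obtain ⟨m, rfl⟩ := Nat.exists_eq_succ_of_ne_zero h0
      rw [show 2 * (m + 1) - 1 = 2 * m + 1 by omega, pivotXi_two_mul_add_one, pivotXi_two_mul,
        tridiagPivot, Fin.extend_val_apply a hn]
      ring
  · have := n.isLt
    simp only [xiToB, pivotXi_two_mul, pivotXi_two_mul_add_one]
    rw [mul_div_cancel₀ _ (hd n (by omega)).ne', Fin.extend_val_apply b]

end Existence

section Interleaved

variable {M : ℕ}

def prevCoord (r : Fin M) : (Fin M → ℝ) →L[ℝ] ℝ :=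
  if h : (r : ℕ) = 0 then 0 else ContinuousLinearMap.proj (⟨r - 1, by omega⟩ : Fin M)

lemma prevCoord_apply (r : Fin M) (ξ : Fin M → ℝ) :
    prevCoord r ξ = if h : (r : ℕ) = 0 then 0 else ξ ⟨r - 1, by omega⟩ := by
  unfold prevCoord
  split_ifs <;> rfl

-- The Jacobi coefficients in the order `a₀, b₀, a₁, b₁, …` (see `xiToAB_apply`).
def interleavedAB (ξ : Fin M → ℝ) (r : Fin M) : ℝ :=
  if Even (r : ℕ) then prevCoord r ξ + ξ r else prevCoord r ξ * ξ r

def interleavedABDeriv (ξ : Fin M → ℝ) (r : Fin M) : (Fin M → ℝ) →L[ℝ] ℝ :=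
  if Even (r : ℕ) then prevCoord r + ContinuousLinearMap.proj r
  else prevCoord r ξ • ContinuousLinearMap.proj r + ξ r • prevCoord r

lemma contDiff_interleavedAB_apply {n : WithTop ℕ∞} (r : Fin M) :
    ContDiff ℝ n fun ξ => interleavedAB ξ r := by
  unfold interleavedAB
  split_ifs
  · exact (prevCoord r).contDiff.add (contDiff_apply ℝ ℝ r)
  · exact (prevCoord r).contDiff.mul (contDiff_apply ℝ ℝ r)

lemma hasFDerivAt_interleavedAB_apply (ξ : Fin M → ℝ) (r : Fin M) :
    HasFDerivAt (fun η => interleavedAB η r) (interleavedABDeriv ξ r) ξ := by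
  unfold interleavedAB interleavedABDeriv
  split_ifs
  · exact (prevCoord r).hasFDerivAt.add (hasFDerivAt_apply r ξ)
  · exact (prevCoord r).hasFDerivAt.mul (hasFDerivAt_apply r ξ)

lemma prevCoord_single {r l : Fin M} (h : r ≤ l) (x : ℝ) :
    prevCoord r (Pi.single l x) = 0 := by
  unfold prevCoord
  split_ifs with h0
  · rfl
  · rw [ContinuousLinearMap.proj_apply, Pi.single_apply, if_neg]
    rw [Fin.le_def] at h
    simp only [Fin.ext_iff]
    omega

lemma interleavedABDeriv_single {ξ : Fin M → ℝ} {r l : Fin M} (h : r ≤ l) :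
    interleavedABDeriv ξ r (Pi.single l 1) =
      (if Even (r : ℕ) then 1 else prevCoord r ξ) * (Pi.single l (1 : ℝ) : Fin M → ℝ) r := by
  unfold interleavedABDeriv
  split_ifs <;> simp [prevCoord_single h]

theorem det_pi_interleavedABDeriv (ξ : Fin M → ℝ) :
    LinearMap.det (ContinuousLinearMap.pi (interleavedABDeriv ξ) : (Fin M → ℝ) →ₗ[ℝ] Fin M → ℝ) =
      ∏ r : Fin M, if Even (r : ℕ) then 1 else prevCoord r ξ := by
  rw [← LinearMap.det_toMatrix', Matrix.det_of_isLowerTriangular]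
  · simp [LinearMap.toMatrix'_apply, interleavedABDeriv_single le_rfl]
  · intro r l (h : r < l)
    simp [LinearMap.toMatrix'_apply, interleavedABDeriv_single h.le, h.ne]

theorem injOn_interleavedAB :
    Set.InjOn (interleavedAB (M := M)) {ξ | ∀ r, ξ r ≠ 0} := by
  intro ξ hξ η _ h
  suffices ∀ n (hn : n < M), ξ ⟨n, hn⟩ = η ⟨n, hn⟩ from funext fun r => this r r.isLt
  intro n
  induction n using Nat.strong_induction_on with
  | _ n ih =>
    intro hn
    have hprev : prevCoord ⟨n, hn⟩ ξ = prevCoord ⟨n, hn⟩ η := by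
      unfold prevCoord
      split_ifs with h0
      · rfl
      · exact ih (n - 1) (by simp only at h0; omega) _
    have hr := congrFun h ⟨n, hn⟩
    unfold interleavedAB at hr
    split_ifs at hr with he
    · rw [hprev] at hr; exact add_left_cancel hr
    · have hne : prevCoord ⟨n, hn⟩ ξ ≠ 0 := by
        unfold prevCoord
        rw [dif_neg (show n ≠ 0 by rintro rfl; simp at he)]
        exact hξ _
      rw [hprev] at hr hne
      exact mul_left_cancel₀ hne hr

end Interleaved

lemma abs_det_pi_comp_perm {ι : Type*} [Fintype ι] [DecidableEq ι]
    (ℓ : ι → (ι → ℝ) →L[ℝ] ℝ) (σ : Equiv.Perm ι) :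
    |LinearMap.det (ContinuousLinearMap.pi fun k => ℓ (σ k) : (ι → ℝ) →ₗ[ℝ] ι → ℝ)| =
      |LinearMap.det (ContinuousLinearMap.pi ℓ : (ι → ℝ) →ₗ[ℝ] ι → ℝ)| := by
  have : LinearMap.toMatrix' (ContinuousLinearMap.pi fun k => ℓ (σ k) : (ι → ℝ) →ₗ[ℝ] ι → ℝ) =
      (LinearMap.toMatrix' (ContinuousLinearMap.pi ℓ : (ι → ℝ) →ₗ[ℝ] ι → ℝ)).submatrix σ id := by
    ext k l
    simp [LinearMap.toMatrix'_apply]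
  rw [← LinearMap.det_toMatrix', this, Matrix.det_permute, abs_mul, abs_unit_intCast, one_mul,
    LinearMap.det_toMatrix']

section XiToAB

variable {N : ℕ}

def interleavePerm (N : ℕ) : Equiv.Perm (Fin (2 * N - 1)) :=
  Equiv.ofBijective
    (fun k => if h : (k : ℕ) < N then ⟨2 * k, by omega⟩
      else ⟨2 * (k - N) + 1, by have := k.isLt; omega⟩)
    (Finite.injective_iff_bijective.mp fun k l h => by
      split_ifs at h <;> simp only [Fin.ext_iff] at h <;> ext <;> omega)

lemma xiToAB_apply (ξ : Fin (2 * N - 1) → ℝ) (k : Fin (2 * N - 1)) :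
    xiToAB N ξ k = interleavedAB ξ (interleavePerm N k) := by
  simp only [xiToAB, xiToA, xiToB, interleavedAB, interleavePerm, Equiv.ofBijective_apply,
    prevCoord_apply]
  split_ifs <;> simp_all

lemma xiToAB_eq : xiToAB N = fun ξ k => interleavedAB ξ (interleavePerm N k) :=
  funext fun ξ => funext (xiToAB_apply ξ)

theorem contDiff_xiToAB {n : WithTop ℕ∞} : ContDiff ℝ n (xiToAB N) := by
  rw [xiToAB_eq]
  exact contDiff_pi.mpr fun k => contDiff_interleavedAB_apply _

theorem hasFDerivAt_xiToAB (ξ : Fin (2 * N - 1) → ℝ) :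
    HasFDerivAt (xiToAB N)
      (ContinuousLinearMap.pi fun k => interleavedABDeriv ξ (interleavePerm N k)) ξ := by
  rw [xiToAB_eq]
  exact hasFDerivAt_pi.mpr fun k => hasFDerivAt_interleavedAB_apply ξ _

lemma prod_ite_even_prevCoord (ξ : Fin (2 * N - 1) → ℝ) :
    ∏ r : Fin (2 * N - 1), (if Even (r : ℕ) then 1 else prevCoord r ξ) =
      ∏ i : Fin (N - 1), ξ ⟨2 * i, by omega⟩ := by
  set odd : Fin (N - 1) → Fin (2 * N - 1) := fun i => ⟨2 * i + 1, by omega⟩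
  have hodd : Function.Injective odd := fun i j h => by simpa [odd, Fin.ext_iff] using h
  rw [← Finset.prod_subset (Finset.subset_univ (Finset.univ.image odd)),
    Finset.prod_image hodd.injOn]
  · exact Finset.prod_congr rfl fun i _ => by simp [odd, prevCoord_apply]
  · intro r _ hr
    rw [if_pos]
    by_contra hr'
    obtain ⟨i, hi⟩ := Nat.not_even_iff_odd.mp hr'
    exact hr (Finset.mem_image.mpr ⟨⟨i, by omega⟩, Finset.mem_univ _, Fin.ext (by simp [odd, hi])⟩)

theorem abs_det_fderiv_xiToAB (ξ : Fin (2 * N - 1) → ℝ) :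
    |LinearMap.det (fderiv ℝ (xiToAB N) ξ).toLinearMap|
      = |∏ i : Fin (N - 1), ξ ⟨2 * (i : ℕ), by omega⟩| := by
  rw [(hasFDerivAt_xiToAB ξ).fderiv, abs_det_pi_comp_perm, det_pi_interleavedABDeriv,
    prod_ite_even_prevCoord]

theorem injOn_xiToAB : Set.InjOn (xiToAB N) {ξ | ∀ i, 0 < ξ i} := by
  intro ξ hξ η hη h
  apply injOn_interleavedAB (fun i => (hξ i).ne') (fun i => (hη i).ne')
  funext r
  obtain ⟨k, rfl⟩ := (interleavePerm N).surjective r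
  simpa only [xiToAB_apply] using congrFun h k

theorem injOn_bidiag_mul_transpose :
    Set.InjOn (fun ξ : Fin (2 * N - 1) → ℝ => bidiag ξ * (bidiag ξ)ᵀ) {ξ | ∀ i, 0 < ξ i} := by
  intro ξ hξ η hη h
  have hnonneg {ξ : Fin (2 * N - 1) → ℝ} (hξ : ∀ i, 0 < ξ i) i : 0 ≤ xiToB ξ i :=
    (mul_pos (hξ _) (hξ _)).le
  simp only [bidiag_mul_transpose ξ fun i => (hξ i).le,
    bidiag_mul_transpose η fun i => (hη i).le] at h
  obtain ⟨hA, hB⟩ := (jacobiMatrix_inj (hnonneg hξ) (hnonneg hη)).mp h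
  apply injOn_xiToAB hξ hη
  unfold xiToAB
  rw [hA, hB]

end XiToAB

/-- bidiagonal Cholesky factorization of Jacobi matrices and the
Jacobian of the reparametrization `ξ ↦ (a, b)`. -/
theorem cholesky_reparametrization (N : ℕ) :
    (∀ ξ : Fin (2 * N - 1) → ℝ, (∀ i, 0 < ξ i) →
      bidiag ξ * (bidiag ξ)ᵀ = jacobiMatrix (xiToA ξ) (xiToB ξ)) ∧
    (∀ (a : Fin N → ℝ) (b : Fin (N - 1) → ℝ), (∀ i, 0 < b i) →
      (jacobiMatrix a b).PosDef →
      ∃! ξ : Fin (2 * N - 1) → ℝ, (∀ i, 0 < ξ i) ∧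
        bidiag ξ * (bidiag ξ)ᵀ = jacobiMatrix a b) ∧
    Set.InjOn (xiToAB N) {ξ | ∀ i, 0 < ξ i} ∧
    ContDiffOn ℝ 1 (xiToAB N) {ξ : Fin (2 * N - 1) → ℝ | ∀ i, 0 < ξ i} ∧
    ∀ ξ ∈ {ξ : Fin (2 * N - 1) → ℝ | ∀ i, 0 < ξ i},
      |LinearMap.det (fderiv ℝ (xiToAB N) ξ).toLinearMap|
        = ∏ i : Fin (N - 1), ξ ⟨2 * (i : ℕ), by have := i.isLt; omega⟩ := by
  have hfact (ξ : Fin (2 * N - 1) → ℝ) (hξ : ∀ i, 0 < ξ i) :=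
    bidiag_mul_transpose ξ fun i => (hξ i).le
  refine ⟨hfact, fun a b hb hJ => ?_, injOn_xiToAB, contDiff_xiToAB.contDiffOn, fun ξ hξ => ?_⟩
  · obtain ⟨ξ, hξ, rfl, rfl⟩ := exists_pos_xiToA_xiToB hb hJ
    exact ⟨ξ, ⟨hξ, hfact ξ hξ⟩, fun η ⟨hη, h⟩ =>
      injOn_bidiag_mul_transpose hη hξ (h.trans (hfact ξ hξ).symm)⟩
  · rw [abs_det_fderiv_xiToAB, abs_of_pos (Finset.prod_pos fun i _ => hξ _)]
end
end

section
/- Fix an integer N ≥ 2 and let ξ ∈ (0,1)^{2N−1} ⊂ (0,∞)^{2N−1}. Define a_1 = ξ_1, a_n = ξ_{2n−2} + ξ_{2n−1} for 2 ≤ n ≤ N, and b_n = ξ_{2n−1} ξ_{2n} for 1 ≤ n ≤ N−1, and suppose all eigenvalues of the Jacobi matrix J_{a,b} lie in the open interval (0,1). Then there exist c_1,…,c_{2N−1} ∈ (0,1) such that ξ_1 = c_1 and ξ_n = (1 − c_{n−1}) c_n for all 2 ≤ n ≤ 2N−1 (Wall's theorem on chain sequences for finitely supported measures). -/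
open MeasureTheory ProbabilityTheory Matrix Finset Real
open scoped ENNReal NNReal

noncomputable section

/-!
Since the spectrum of `J` lies below `1`, the matrix `1 - J` is positive definite, so its leading
principal minors `Δ₀, …, Δ_N` are positive. Expanding these tridiagonal determinants gives
`Δ_k = q (2k)` for the Wall continuant `q 0 = q 1 = 1`, `q (n + 2) = q (n + 1) - ξ n * q n`
(indices from `0`), and `q (2k + 1) = q (2k + 2) + ξ (2k) * q (2k)` makes every `q n` with
`n ≤ 2N` positive. The parameters `c n = ξ n * q n / q (n + 1)` satisfy
`1 - c n = q (n + 2) / q (n + 1)`, so they lie in `(0, 1)`, and `(1 - c (n - 1)) * c n = ξ n`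
after cancelling `q n * q (n + 1)`.
-/

open scoped ComplexOrder in
lemma Matrix.IsHermitian.posDef_one_sub {𝕜 n : Type*} [RCLike 𝕜] [Fintype n] [DecidableEq n]
    {A : Matrix n n 𝕜} (hA : A.IsHermitian) (h : ∀ i, hA.eigenvalues i < 1) :
    (1 - A).PosDef := by
  rw [hA.spectral_theorem, ← map_one (Unitary.conjStarAlgAut 𝕜 _ hA.eigenvectorUnitary),
    ← map_sub, Unitary.conjStarAlgAut_apply, Unitary.isUnit_coe.posDef_star_right_conjugate_iff,
    ← diagonal_one, diagonal_sub]
  refine PosDef.diagonal fun i => sub_pos.2 ?_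
  rw [Function.comp_apply, ← RCLike.ofReal_one, RCLike.ofReal_lt_ofReal]
  exact h i

def symmTridiagonal {R : Type*} [Zero R] (d e : ℕ → R) (k : ℕ) : Matrix (Fin k) (Fin k) R :=
  Matrix.of fun i j =>
    if (i : ℕ) = j then d i
    else if (i : ℕ) + 1 = j then e i
    else if (j : ℕ) + 1 = i then e j
    else 0

section symmTridiagonal

variable {R : Type*} [Zero R] (d e : ℕ → R) {k : ℕ} {i j : Fin k}

lemma symmTridiagonal_apply_of_eq (h : (i : ℕ) = j) : symmTridiagonal d e k i j = d i := by
  simp [symmTridiagonal, h]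

lemma symmTridiagonal_apply_of_succ_eq (h : (i : ℕ) + 1 = j) :
    symmTridiagonal d e k i j = e i := by
  simp only [symmTridiagonal, of_apply, ← h]
  simp

lemma symmTridiagonal_apply_of_eq_succ (h : (i : ℕ) = j + 1) :
    symmTridiagonal d e k i j = e j := by
  simp only [symmTridiagonal, of_apply, h]
  simp [show (j : ℕ) + 1 + 1 ≠ j by omega]

lemma symmTridiagonal_apply_eq_zero (hij : (i : ℕ) + 1 < j ∨ (j : ℕ) + 1 < i) :
    symmTridiagonal d e k i j = 0 := by
  simp only [symmTridiagonal, of_apply]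
  split_ifs <;> first | rfl | omega

lemma symmTridiagonal_submatrix {l : ℕ} {f g : Fin k → Fin l}
    (hf : ∀ i, (f i : ℕ) = i) (hg : ∀ i, (g i : ℕ) = i) :
    (symmTridiagonal d e l).submatrix f g = symmTridiagonal d e k := by
  ext i j
  simp [symmTridiagonal, hf, hg]

end symmTridiagonal

lemma one_sub_symmTridiagonal {R : Type*} [Ring R] (d e : ℕ → R) (k : ℕ) :
    1 - symmTridiagonal d e k = symmTridiagonal (1 - d) (-e) k := by
  ext i j
  by_cases h : i = j
  · subst h
    simp [symmTridiagonal]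
  · simp only [symmTridiagonal, Matrix.sub_apply, one_apply_ne h, of_apply, Fin.val_ne_of_ne h,
      if_false]
    split_ifs <;> simp

lemma det_symmTridiagonal_add_two {R : Type*} [CommRing R] (d e : ℕ → R) (k : ℕ) :
    (symmTridiagonal d e (k + 2)).det =
      d (k + 1) * (symmTridiagonal d e (k + 1)).det - e k ^ 2 * (symmTridiagonal d e k).det := by
  have hlast : (Fin.last k).castSucc.succAbove (Fin.last k) = Fin.last (k + 1) :=
    Fin.succAbove_castSucc_of_le _ _ le_rfl
  -- deleting row `k + 1` and column `k` leaves a single `e k` in the last column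
  have hminor : ((symmTridiagonal d e (k + 2)).submatrix Fin.castSucc
      (Fin.last k).castSucc.succAbove).det = e k * (symmTridiagonal d e k).det := by
    rw [det_succ_column _ (Fin.last _), Fin.sum_univ_castSucc, Finset.sum_eq_zero fun i _ => ?_]
    · rw [submatrix_submatrix, submatrix_apply, hlast, Fin.succAbove_last,
        symmTridiagonal_submatrix d e (f := Fin.castSucc ∘ Fin.castSucc) (fun _ => rfl)
          (g := (Fin.last k).castSucc.succAbove ∘ Fin.castSucc) (fun i => by
            simp [Fin.succAbove_castSucc_of_lt _ _ (Fin.castSucc_lt_last i)]),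
        symmTridiagonal_apply_of_succ_eq d e (by simp)]
      simp [← two_mul, pow_mul]
    · rw [submatrix_apply, hlast, symmTridiagonal_apply_eq_zero d e (by simp)]
      simp
  rw [det_succ_row _ (Fin.last _), Fin.sum_univ_castSucc, Fin.sum_univ_castSucc,
    Finset.sum_eq_zero fun j _ => ?_, Fin.succAbove_last, hminor,
    symmTridiagonal_submatrix d e (f := Fin.castSucc) (g := Fin.castSucc) (fun _ => rfl)
      (fun _ => rfl), symmTridiagonal_apply_of_eq d e rfl,
    symmTridiagonal_apply_of_eq_succ d e (by simp)]
  · simp [pow_succ]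
    ring
  · rw [symmTridiagonal_apply_eq_zero d e (by simp)]
    simp

def wallContinuant (x : ℕ → ℝ) : ℕ → ℝ
  | 0 => 1
  | 1 => 1
  | n + 2 => wallContinuant x (n + 1) - x n * wallContinuant x n

namespace wallContinuant

lemma add_four (x : ℕ → ℝ) (n : ℕ) : wallContinuant x (n + 4) =
    (1 - x (n + 1) - x (n + 2)) * wallContinuant x (n + 2)
      - x n * x (n + 1) * wallContinuant x n := by
  simp only [wallContinuant]
  ring

variable {x : ℕ → ℝ}

lemma pos_of_even_pos {K : ℕ} (hx : ∀ n < 2 * K, 0 ≤ x n)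
    (hq : ∀ k ≤ K, 0 < wallContinuant x (2 * k)) : ∀ n ≤ 2 * K, 0 < wallContinuant x n := by
  intro n hn
  obtain ⟨k, rfl | rfl⟩ := Nat.even_or_odd' n
  · exact hq k (by omega)
  · have hodd : wallContinuant x (2 * k + 1) =
        wallContinuant x (2 * (k + 1)) + x (2 * k) * wallContinuant x (2 * k) := by
      simp only [show 2 * (k + 1) = 2 * k + 2 by ring, wallContinuant]
      ring
    have := hq (k + 1) (by omega)
    have := hq k (by omega)
    have := hx (2 * k) (by omega)
    rw [hodd]
    positivity

end wallContinuant

def chainParam (x : ℕ → ℝ) (n : ℕ) : ℝ :=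
  x n * wallContinuant x n / wallContinuant x (n + 1)

section chainParam

variable {x : ℕ → ℝ} {n : ℕ}

lemma chainParam_zero (x : ℕ → ℝ) : chainParam x 0 = x 0 := by
  simp [chainParam, wallContinuant]

lemma one_sub_chainParam (h : wallContinuant x (n + 1) ≠ 0) :
    1 - chainParam x n = wallContinuant x (n + 2) / wallContinuant x (n + 1) := by
  rw [chainParam, wallContinuant]
  field_simp

lemma one_sub_chainParam_mul (h₁ : wallContinuant x (n + 1) ≠ 0)
    (h₂ : wallContinuant x (n + 2) ≠ 0) :
    (1 - chainParam x n) * chainParam x (n + 1) = x (n + 1) := by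
  rw [one_sub_chainParam h₁, chainParam]
  field_simp

lemma chainParam_mem_Ioo (hx : 0 < x n) (h₀ : 0 < wallContinuant x n)
    (h₁ : 0 < wallContinuant x (n + 1)) (h₂ : 0 < wallContinuant x (n + 2)) :
    chainParam x n ∈ Set.Ioo 0 1 := by
  have hsub : 0 < 1 - chainParam x n := by
    rw [one_sub_chainParam h₁.ne']
    positivity
  exact ⟨by unfold chainParam; positivity, by linarith⟩

end chainParam

def xiDiag (x : ℕ → ℝ) : ℕ → ℝ
  | 0 => x 0
  | m + 1 => x (2 * m + 1) + x (2 * m + 2)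

def xiOffDiag (x : ℕ → ℝ) (m : ℕ) : ℝ :=
  √(x (2 * m) * x (2 * m + 1))

lemma jacobiMatrix_xi_eq_symmTridiagonal {N : ℕ} (ξ : Fin (2 * N - 1) → ℝ) {x : ℕ → ℝ}
    (hx : ∀ i : Fin (2 * N - 1), x i = ξ i) :
    jacobiMatrix (xiToA ξ) (xiToB ξ) = symmTridiagonal (xiDiag x) (xiOffDiag x) N := by
  have hdiag : ∀ i : Fin N, xiToA ξ i = xiDiag x i := by
    rintro ⟨_ | m, hm⟩
    · simp [xiToA, xiDiag, ← hx]
    · simp [xiToA, xiDiag, ← hx, mul_add]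
  have hoff : ∀ m : Fin (N - 1), √(xiToB ξ m) = xiOffDiag x m := fun m => by
    simp [xiToB, xiOffDiag, ← hx]
  ext i j
  simp only [jacobiMatrix, symmTridiagonal, of_apply, ← Fin.val_inj]
  split_ifs <;> simp_all

lemma det_symmTridiagonal_xi_eq_wallContinuant {x : ℕ → ℝ} (hx : ∀ n, 0 ≤ x n) (k : ℕ) :
    (symmTridiagonal (1 - xiDiag x) (-xiOffDiag x) k).det = wallContinuant x (2 * k) := by
  induction k using Nat.twoStepInduction with
  | zero => simp [wallContinuant]
  | one => simp [symmTridiagonal, xiDiag, wallContinuant]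
  | more k ih₀ ih₁ =>
    rw [det_symmTridiagonal_add_two, ih₀, ih₁, show 2 * (k + 2) = 2 * k + 4 by ring,
      wallContinuant.add_four]
    simp only [Pi.sub_apply, Pi.one_apply, Pi.neg_apply, neg_sq, xiDiag, xiOffDiag,
      Real.sq_sqrt (mul_nonneg (hx _) (hx _))]
    ring_nf

theorem wall_chain_sequence_general (N : ℕ)
    (ξ : Fin (2 * N - 1) → ℝ) (hξ : ∀ i, ξ i ∈ Set.Ioo (0 : ℝ) 1)
    (heig : ∀ n, (jacobiMatrix_isHermitian (xiToA ξ) (xiToB ξ)).eigenvalues n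
      ∈ Set.Ioo (0 : ℝ) 1) :
    ∃ c : Fin (2 * N - 1) → ℝ, (∀ i, c i ∈ Set.Ioo (0 : ℝ) 1) ∧ ξ = cToXi c := by
  set x : ℕ → ℝ := Function.extend Fin.val ξ 0
  have hxξ : ∀ i : Fin (2 * N - 1), x i = ξ i := Fin.val_injective.extend_apply ξ 0
  have hx : ∀ n, 0 ≤ x n := fun n => by
    by_cases hn : n < 2 * N - 1
    · exact (hxξ ⟨n, hn⟩ ▸ (hξ ⟨n, hn⟩).1).le
    · have hout : ¬∃ i : Fin (2 * N - 1), (i : ℕ) = n := fun ⟨i, hi⟩ => hn (hi ▸ i.isLt)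
      simp [x, Function.extend_apply' _ _ _ hout]
  have hpd := (jacobiMatrix_isHermitian (xiToA ξ) (xiToB ξ)).posDef_one_sub fun n => (heig n).2
  rw [jacobiMatrix_xi_eq_symmTridiagonal ξ hxξ, one_sub_symmTridiagonal] at hpd
  have hq_even : ∀ k ≤ N, 0 < wallContinuant x (2 * k) := fun k hk => by
    simpa [symmTridiagonal_submatrix _ _ (f := Fin.castLE hk) (g := Fin.castLE hk)
      (fun _ => rfl) (fun _ => rfl), det_symmTridiagonal_xi_eq_wallContinuant hx] using
        (hpd.submatrix (Fin.castLE_injective hk)).det_pos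
  have hq := wallContinuant.pos_of_even_pos (fun n _ => hx n) hq_even
  refine ⟨fun i => chainParam x i, fun i => ?_, funext fun i => ?_⟩
  · exact chainParam_mem_Ioo (hxξ i ▸ (hξ i).1) (hq _ (by omega)) (hq _ (by omega))
      (hq _ (by omega))
  · obtain ⟨_ | n, hn⟩ := i
    · simp [cToXi, chainParam_zero, ← hxξ]
    · rw [cToXi, if_neg n.succ_ne_zero, ← hxξ]
      exact (one_sub_chainParam_mul (hq _ (by omega)).ne' (hq _ (by omega)).ne').symm

/-- Wall's theorem on chain sequences for finitely supported measures. -/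
theorem wall_chain_sequence (N : ℕ) (hN : 2 ≤ N)
    (ξ : Fin (2 * N - 1) → ℝ) (hξ : ∀ i, ξ i ∈ Set.Ioo (0 : ℝ) 1)
    (heig : ∀ n, (jacobiMatrix_isHermitian (xiToA ξ) (xiToB ξ)).eigenvalues n
      ∈ Set.Ioo (0 : ℝ) 1) :
    ∃ c : Fin (2 * N - 1) → ℝ, (∀ i, c i ∈ Set.Ioo (0 : ℝ) 1) ∧ ξ = cToXi c :=
  wall_chain_sequence_general N ξ hξ heig
end
end

section
/- Fix an integer N ≥ 2 and c ∈ (0,1)^{2N−1}. Define ξ_1 = c_1 and ξ_n = (1 − c_{n−1}) c_n for 2 ≤ n ≤ 2N−1; then define a_1 = ξ_1, a_n = ξ_{2n−2} + ξ_{2n−1} for 2 ≤ n ≤ N, and b_n = ξ_{2n−1} ξ_{2n} for 1 ≤ n ≤ N−1, and let J = J_{a,b} with eigenvalues x_1,…,x_N (with multiplicity). Then ∏_{n=1}^N x_n = det J = ∏_{n=1}^N c_{2n−1} · ∏_{n=1}^{N−1} (1 − c_{2n}) and ∏_{n=1}^N (1 − x_n) = det(I_N − J) = ∏_{n=1}^{2N−1}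 (1 − c_n). -/
open MeasureTheory ProbabilityTheory Matrix Finset Real
open scoped ENNReal NNReal

noncomputable section

/-!
With `ξ = cToXi c`, the Jacobi matrix factors as `J = Ξ Ξᵀ` through the lower bidiagonal matrix
`Ξ = bidiag ξ`, so `det J = ∏ ξ_{2n-1} = c_1 ∏_{n ≥ 2} (1 - c_{2n-2}) c_{2n-1}`. For `I - J`,
conjugating by `diag((-1)^n)` flips the signs of the off-diagonal entries, and the result is again
a Jacobi matrix of the same shape, built from the canonical moments of the measure reflected under
`x ↦ 1 - x`; the formula for `det J` applied to those moments gives `∏ (1 - c_n)`.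
-/

theorem Matrix.IsHermitian.det_one_sub_eq_prod_one_sub_eigenvalues {n 𝕜 : Type*} [Fintype n]
    [DecidableEq n] [RCLike 𝕜] {A : Matrix n n 𝕜} (hA : A.IsHermitian) :
    (1 - A).det = ∏ i, (1 - (hA.eigenvalues i : 𝕜)) := by
  rw [← map_one (scalar n), ← eval_charpoly, hA.charpoly_eq, Polynomial.eval_prod]
  simp

theorem Fin.prod_univ_two_mul_sub_one {M : Type*} [CommMonoid M] {N : ℕ}
    (f : Fin (2 * N - 1) → M) :
    ∏ k, f k = (∏ n : Fin N, f ⟨2 * n, by omega⟩) * ∏ n : Fin (N - 1), f ⟨2 * n + 1, by omega⟩ := by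
  let φ : Fin N ⊕ Fin (N - 1) → Fin (2 * N - 1) :=
    Sum.elim (fun n => ⟨2 * n, by omega⟩) (fun n => ⟨2 * n + 1, by omega⟩)
  have hφ : φ.Bijective := by
    constructor
    · rintro (m | m) (n | n) h <;> simp [φ, Fin.ext_iff] at h ⊢ <;> omega
    · intro k
      obtain ⟨m, hm | hm⟩ := Nat.even_or_odd' k
      · exact ⟨.inl ⟨m, by omega⟩, Fin.ext (by simp [φ, hm])⟩
      · exact ⟨.inr ⟨m, by omega⟩, Fin.ext (by simp [φ, hm])⟩
  rw [← Fintype.prod_bijective φ hφ (f ∘ φ) f (fun _ => rfl), Fintype.prod_sum_type]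
  rfl

theorem det_one_sub_jacobiMatrix {N : ℕ} (a : Fin N → ℝ) (b : Fin (N - 1) → ℝ) :
    (1 - jacobiMatrix a b).det = (jacobiMatrix (1 - a) b).det := by
  set s : Fin N → ℝ := fun i => (-1) ^ (i : ℕ) with hs
  have hs2 (k : ℕ) : ((-1 : ℝ) ^ k) ^ 2 = 1 := by
    rw [← pow_mul, mul_comm, pow_mul, neg_one_sq, one_pow]
  have hconj : diagonal s * (1 - jacobiMatrix a b) * diagonal s = jacobiMatrix (1 - a) b := by
    ext i j
    simp only [diagonal_mul, mul_diagonal, Matrix.sub_apply, one_apply, jacobiMatrix, of_apply, hs]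
    split_ifs with hij hsucc hpred
    · subst hij
      rw [Pi.sub_apply, Pi.one_apply]
      linear_combination (1 - a i) * hs2 i
    · rw [← hsucc]
      generalize √(b _) = x
      linear_combination x * hs2 i
    · rw [← hpred]
      generalize √(b _) = x
      linear_combination x * hs2 j
    · simp
  have hdet_s : (diagonal s).det * (diagonal s).det = 1 := by
    rw [← det_mul, diagonal_mul_diagonal]
    simp [hs, ← pow_add, ← two_mul, pow_mul]
  rw [← hconj, det_mul, det_mul, mul_right_comm, hdet_s, one_mul]

theorem jacobiMatrix_xiToA_xiToB_eq_bidiag_mul_transpose {N : ℕ} {ξ : Fin (2 * N - 1) → ℝ}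
    (hξ : ∀ k, 0 ≤ ξ k) :
    jacobiMatrix (xiToA ξ) (xiToB ξ) = bidiag ξ * (bidiag ξ)ᵀ := by
  have upper (i j : Fin N) (hij : i ≤ j) :
      jacobiMatrix (xiToA ξ) (xiToB ξ) i j = (bidiag ξ * (bidiag ξ)ᵀ) i j := by
    simp only [mul_apply, transpose_apply, bidiag, of_apply, jacobiMatrix, xiToA, xiToB,
      Fin.ext_iff]
    rcases hij.lt_or_eq with h | rfl
    · replace h : (i : ℕ) < j := h
      by_cases hsucc : (i : ℕ) + 1 = j
      · rw [Finset.sum_eq_single i]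
        · simp [h.ne, h.ne', hsucc, Real.sqrt_mul (hξ _)]
        · intro k _ hk
          rw [Ne, Fin.ext_iff] at hk
          split_ifs <;> first | omega | simp
        · simp
      · rw [if_neg (by omega), dif_neg hsucc, dif_neg (by omega)]
        refine (Finset.sum_eq_zero fun k _ => ?_).symm
        split_ifs <;> first | omega | simp
    · by_cases h0 : (i : ℕ) = 0
      · rw [Finset.sum_eq_single i]
        · simp [h0, Real.mul_self_sqrt (hξ _)]
        · intro k _ hk
          rw [Ne, Fin.ext_iff] at hk
          split_ifs <;> first | omega | simp
        · simp
      · rw [Fintype.sum_eq_add i ⟨i - 1, by omega⟩ (by simp [Fin.ext_iff]; omega)]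
        · have hpred : (i : ℕ) - 1 + 1 = i := by omega
          simp [h0, hpred, Real.mul_self_sqrt (hξ _), show (i : ℕ) ≠ i - 1 by omega]
          rw [add_comm]
          congr 3
          omega
        · rintro k ⟨hk, hk'⟩
          simp only [Ne, Fin.ext_iff] at hk hk'
          split_ifs <;> first | omega | simp
  ext i j
  rcases le_total i j with hij | hji
  · exact upper i j hij
  · rw [← (jacobiMatrix_isHermitian _ _).apply, ← (mul_transpose_isHermitian _).apply]
    exact upper j i hji

theorem det_bidiag {N : ℕ} (ξ : Fin (2 * N - 1) → ℝ) :
    (bidiag ξ).det = ∏ n : Fin N, √(ξ ⟨2 * n, by omega⟩) := by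
  rw [det_of_isLowerTriangular _ fun i j (hij : i < j) => ?_]
  · simp [bidiag]
  · simp [bidiag, hij.ne, show ¬ ((j : ℕ) + 1 = i) by omega]

theorem det_jacobiMatrix_xiToA_xiToB {N : ℕ} {ξ : Fin (2 * N - 1) → ℝ} (hξ : ∀ k, 0 ≤ ξ k) :
    (jacobiMatrix (xiToA ξ) (xiToB ξ)).det = ∏ n : Fin N, ξ ⟨2 * n, by omega⟩ := by
  rw [jacobiMatrix_xiToA_xiToB_eq_bidiag_mul_transpose hξ, det_mul, det_transpose, det_bidiag,
    ← Finset.prod_mul_distrib]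
  exact Finset.prod_congr rfl fun n _ => Real.mul_self_sqrt (hξ _)

section CanonicalMoments

variable {N : ℕ} {c : Fin (2 * N - 1) → ℝ}

theorem cToXi_nonneg (hc : ∀ k, c k ∈ Set.Icc 0 1) (k : Fin (2 * N - 1)) : 0 ≤ cToXi c k := by
  unfold cToXi
  split_ifs
  · exact (hc k).1
  · exact mul_nonneg (sub_nonneg.2 (hc _).2) (hc k).1

theorem prod_cToXi_two_mul (c : Fin (2 * N - 1) → ℝ) :
    ∏ n : Fin N, cToXi c ⟨2 * n, by omega⟩ =
      (∏ n : Fin N, c ⟨2 * n, by omega⟩) * ∏ n : Fin (N - 1), (1 - c ⟨2 * n + 1, by omega⟩) := by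
  obtain _ | M := N
  · simp
  · have hodd (n : ℕ) : 2 * (n + 1) - 1 = 2 * n + 1 := by omega
    rw [Fin.prod_univ_succ, Fin.prod_univ_succ]
    simp [cToXi, hodd, Finset.prod_mul_distrib]
    ring

theorem det_jacobiMatrix_cToXi (hc : ∀ k, c k ∈ Set.Icc 0 1) :
    (jacobiMatrix (xiToA (cToXi c)) (xiToB (cToXi c))).det =
      (∏ n : Fin N, c ⟨2 * n, by omega⟩) * ∏ n : Fin (N - 1), (1 - c ⟨2 * n + 1, by omega⟩) := by
  rw [det_jacobiMatrix_xiToA_xiToB (cToXi_nonneg hc), prod_cToXi_two_mul]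

/-- The canonical moments of the image of a measure on `[0, 1]` under `x ↦ 1 - x`: the odd ones
(one-based) are complemented, the even ones are kept. -/
def reflectMoments (c : Fin (2 * N - 1) → ℝ) : Fin (2 * N - 1) → ℝ :=
  fun k => if Even (k : ℕ) then 1 - c k else c k

theorem reflectMoments_mem_Icc (hc : ∀ k, c k ∈ Set.Icc 0 1) (k : Fin (2 * N - 1)) :
    reflectMoments c k ∈ Set.Icc 0 1 := by
  have := hc k
  unfold reflectMoments
  split_ifs <;> constructor <;> linarith [this.1, this.2]

theorem one_sub_xiToA_cToXi (c : Fin (2 * N - 1) → ℝ) :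
    1 - xiToA (cToXi c) = xiToA (cToXi (reflectMoments c)) := by
  ext n
  by_cases h0 : (n : ℕ) = 0
  · simp [xiToA, cToXi, reflectMoments, h0]
  · have he : Even (2 * (n : ℕ) - 1 - 1) := ⟨n - 1, by omega⟩
    have ho : ¬ Even (2 * (n : ℕ) - 1) := by rw [Nat.not_even_iff_odd]; exact ⟨n - 1, by omega⟩
    simp [xiToA, cToXi, reflectMoments, h0, he, ho, show 2 * (n : ℕ) - 1 ≠ 0 by omega]
    ring

theorem xiToB_cToXi_reflectMoments (c : Fin (2 * N - 1) → ℝ) :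
    xiToB (cToXi (reflectMoments c)) = xiToB (cToXi c) := by
  ext n
  by_cases h0 : (n : ℕ) = 0
  · simp [xiToB, cToXi, reflectMoments, h0]
    ring
  · have ho : ¬ Even (2 * (n : ℕ) - 1) := by rw [Nat.not_even_iff_odd]; exact ⟨n - 1, by omega⟩
    simp [xiToB, cToXi, reflectMoments, h0, ho]
    ring

theorem det_one_sub_jacobiMatrix_cToXi (hc : ∀ k, c k ∈ Set.Icc 0 1) :
    (1 - jacobiMatrix (xiToA (cToXi c)) (xiToB (cToXi c))).det = ∏ k, (1 - c k) := by
  rw [det_one_sub_jacobiMatrix, one_sub_xiToA_cToXi, ← xiToB_cToXi_reflectMoments,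
    det_jacobiMatrix_cToXi (reflectMoments_mem_Icc hc), Fin.prod_univ_two_mul_sub_one]
  congr 1 <;> refine Finset.prod_congr rfl fun n _ => ?_ <;> simp [reflectMoments]

end CanonicalMoments

/-- determinants of `J` and `I - J` in terms of canonical moments. -/
theorem det_jacobi_canonical_moments (N : ℕ)
    (c : Fin (2 * N - 1) → ℝ) (hc : ∀ i, c i ∈ Set.Ioo (0 : ℝ) 1) :
    (∏ n, (jacobiMatrix_isHermitian (xiToA (cToXi c)) (xiToB (cToXi c))).eigenvalues n
        = (jacobiMatrix (xiToA (cToXi c)) (xiToB (cToXi c))).det) ∧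
    ((jacobiMatrix (xiToA (cToXi c)) (xiToB (cToXi c))).det
        = (∏ n : Fin N, c ⟨2 * (n : ℕ), by have := n.isLt; omega⟩) *
          ∏ n : Fin (N - 1), (1 - c ⟨2 * (n : ℕ) + 1, by have := n.isLt; omega⟩)) ∧
    (∏ n, (1 - (jacobiMatrix_isHermitian (xiToA (cToXi c)) (xiToB (cToXi c))).eigenvalues n)
        = (1 - jacobiMatrix (xiToA (cToXi c)) (xiToB (cToXi c))).det) ∧
    ((1 - jacobiMatrix (xiToA (cToXi c)) (xiToB (cToXi c))).det
        = ∏ i, (1 - c i)) := by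
  have hc' (i : Fin (2 * N - 1)) : c i ∈ Set.Icc 0 1 := Set.Ioo_subset_Icc_self (hc i)
  have hJ := jacobiMatrix_isHermitian (xiToA (cToXi c)) (xiToB (cToXi c))
  exact ⟨hJ.det_eq_prod_eigenvalues.symm, det_jacobiMatrix_cToXi hc',
    hJ.det_one_sub_eq_prod_one_sub_eigenvalues.symm, det_one_sub_jacobiMatrix_cToXi hc'⟩
end
end
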